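/- arXiv:2501.15212 — 3 statements merged into one kernel-verified Lean document; each statement's English description precedes it below -/
import Mathlib

section
/- Global existence and monotonicity of steady flows in a divergent nozzle. Let L > 0 and a ∈ C¹([0,L]) with a(x) > 0 and a'(x) > 0 on [0,L]. For any x₀ ∈ [0,L) and any data ρ₋ > 0, u₋ > 0 with u₋ ≠ 1, the initial value problem dρ/dx = (a'(x)/a(x)) ρu²/(1 − u²), du/dx = (a'(x)/a(x)) u/(u² − 1), (ρ,u)(x₀) = (ρ₋, u₋) has a unique C¹ solution on [x₀, L]; moreover, for every x ∈ (x₀, L]: if u₋ > 1 then u(x) > u₋ and 0 < ρ(x) < ρ₋, while if 0 < u₋ < 1 then 0 < u(x) < u₋ and ρ(x) > ρ₋. -/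
/-!
Along a solution, `bernoulliFun u = u²/2 - log u` changes exactly like `log a` (Bernoulli's law
`u²/2 + log ρ = const` combined with conservation of mass `ρua = const`), and `ρ exp (u²/2)` is
constant. The function `v ↦ v²/2 - log v` takes its minimum `1/2` at the sonic value `v = 1` and
maps each of `(0, 1)` and `(1, ∞)` strictly monotonically onto `(1/2, ∞)`. Since `a` increases,
the relation `bernoulliFun u = bernoulliFun u₋ + log (a x / a x₀)` can be solved for `u` on the
branch of `u₋` for every `x`: the flow never becomes sonic, accelerates on the supersonic branch and
decelerates on the subsonic one, and the density moves the opposite way. A competing solution obeys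
the same relation as long as it stays on that branch, hence agrees with the explicit one up to the
first point where it would leave the branch, so it never leaves it.
-/

open Set Filter Topology Real Function

theorem continuousAt_of_antitoneOn_of_image_mem_nhds {α β : Type*} [LinearOrder α]
    [TopologicalSpace α] [OrderTopology α] [LinearOrder β] [TopologicalSpace β] [OrderTopology β]
    [DenselyOrdered β] {f : α → β} {s : Set α} {a : α} (h_anti : AntitoneOn f s) (hs : s ∈ 𝓝 a)
    (hfs : f '' s ∈ 𝓝 (f a)) : ContinuousAt f a :=
  continuousAt_of_monotoneOn_of_image_mem_nhds (β := βᵒᵈ) h_anti hs hfs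

theorem hasDerivAt_invFunOn {f : ℝ → ℝ} {s t : Set ℝ} {f' y : ℝ} (hbij : BijOn f s t)
    (hf : StrictMonoOn f s ∨ StrictAntiOn f s) (hs : IsOpen s) (ht : t ∈ 𝓝 y)
    (hf' : HasDerivAt f f' (invFunOn f s y)) (hf'0 : f' ≠ 0) :
    HasDerivAt (invFunOn f s) f'⁻¹ y := by
  have hinv := hbij.invOn_invFunOn
  have hg := hbij.symm hinv.symm
  have himg : invFunOn f s '' t ∈ 𝓝 (invFunOn f s y) := by
    rw [hg.image_eq]
    exact hs.mem_nhds (hg.mapsTo (mem_of_mem_nhds ht))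
  have hcont : ContinuousAt (invFunOn f s) y := by
    rcases hf with hf | hf
    · refine continuousAt_of_monotoneOn_of_image_mem_nhds (fun y₁ h₁ y₂ h₂ h => ?_) ht himg
      rwa [← hf.le_iff_le (hg.mapsTo h₁) (hg.mapsTo h₂), hinv.2 h₁, hinv.2 h₂]
    · refine continuousAt_of_antitoneOn_of_image_mem_nhds (fun y₁ h₁ y₂ h₂ h => ?_) ht himg
      rwa [← hf.le_iff_ge (hg.mapsTo h₁) (hg.mapsTo h₂), hinv.2 h₁, hinv.2 h₂]
  exact hf'.of_local_left_inverse hcont hf'0 (eventually_of_mem ht fun z hz => hinv.2 hz)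

theorem contDiffOn_one_of_hasDerivWithinAt {f f' : ℝ → ℝ} {s : Set ℝ} (hs : UniqueDiffOn ℝ s)
    (hf : ∀ x ∈ s, HasDerivWithinAt f (f' x) s x) (hf' : ContinuousOn f' s) :
    ContDiffOn ℝ 1 f s :=
  (contDiffOn_one_iff_derivWithin hs).2 ⟨fun x hx => (hf x hx).differentiableWithinAt,
    hf'.congr fun x hx => (hf x hx).derivWithin (hs x hx)⟩

theorem eq_of_hasDerivWithinAt_eq_zero {f : ℝ → ℝ} {a b : ℝ}
    (hf : ∀ x ∈ Icc a b, HasDerivWithinAt f 0 (Icc a b) x) : ∀ x ∈ Icc a b, f x = f a :=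
  constant_of_has_deriv_right_zero (fun x hx => (hf x hx).continuousWithinAt) fun x hx =>
    (hf x (Ico_subset_Icc_self hx)).mono_of_mem_nhdsWithin (Icc_mem_nhdsGE_of_mem hx)

theorem strictMonoOn_Icc_of_hasDerivWithinAt_pos {f f' : ℝ → ℝ} {a b : ℝ}
    (hf : ∀ x ∈ Icc a b, HasDerivWithinAt f (f' x) (Icc a b) x) (hf' : ∀ x ∈ Icc a b, 0 < f' x) :
    StrictMonoOn f (Icc a b) :=
  strictMonoOn_of_hasDerivWithinAt_pos (convex_Icc a b) (fun x hx => (hf x hx).continuousWithinAt)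
    (fun x hx => (hf x (interior_subset hx)).mono interior_subset)
    fun x hx => hf' x (interior_subset hx)

theorem eqOn_Icc_of_eq_of_mapsTo {f g : ℝ → ℝ} {B : Set ℝ} {a b : ℝ} (hB : IsOpen B)
    (hf : ContinuousOn f (Icc a b)) (hg : ContinuousOn g (Icc a b)) (hgB : MapsTo g (Icc a b) B)
    (hfa : f a ∈ B) (hfg : ∀ t ∈ Icc a b, MapsTo f (Icc a t) B → f t = g t) :
    EqOn f g (Icc a b) := by
  suffices hfB : MapsTo f (Icc a b) B from
    fun t ht => hfg t ht (hfB.mono_left (Icc_subset_Icc_right ht.2))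
  by_contra hfB
  obtain ⟨z, hz, hzB⟩ : ∃ z ∈ Icc a b, f z ∉ B := by simpa [MapsTo, and_assoc] using hfB
  -- `sInf S` is the first point where `f` leaves `B`
  set S := Icc a b ∩ f ⁻¹' Bᶜ
  have hbdd : BddBelow S := ⟨a, fun t ht => ht.1.1⟩
  have hsS : sInf S ∈ S :=
    (hf.preimage_isClosed_of_isClosed isClosed_Icc hB.isClosed_compl).csInf_mem ⟨z, hz, hzB⟩ hbdd
  have hbelow : ∀ t ∈ Ico a (sInf S), f t ∈ B := fun t ht => by_contra fun htB =>
    (csInf_le hbdd ⟨⟨ht.1, ht.2.le.trans hsS.1.2⟩, htB⟩).not_gt ht.2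
  have has : a < sInf S := hsS.1.1.lt_of_ne fun h => hsS.2 (h ▸ hfa)
  have heq : EqOn f g (Ico a (sInf S)) := fun t ht =>
    hfg t ⟨ht.1, ht.2.le.trans hsS.1.2⟩ fun r hr => hbelow r ⟨hr.1, hr.2.trans_lt ht.2⟩
  have hIcc : Icc a (sInf S) ⊆ Icc a b := Icc_subset_Icc_right hsS.1.2
  have hs : f (sInf S) = g (sInf S) :=
    heq.of_subset_closure (hf.mono hIcc) (hg.mono hIcc) Ico_subset_Icc_self
      (closure_Ico has.ne).ge ⟨has.le, le_rfl⟩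
  exact hsS.2 (hs ▸ hgB hsS.1)

namespace Nozzle

noncomputable def bernoulliFun (v : ℝ) : ℝ := v ^ 2 / 2 - log v

theorem bernoulliFun_one : bernoulliFun 1 = 1 / 2 := by simp [bernoulliFun]

theorem hasDerivAt_bernoulliFun {v : ℝ} (hv : v ≠ 0) :
    HasDerivAt bernoulliFun ((v ^ 2 - 1) / v) v := by
  refine (((hasDerivAt_pow 2 v).div_const 2).sub (hasDerivAt_log hv)).congr_deriv ?_
  field_simp
  ring

theorem continuousOn_bernoulliFun : ContinuousOn bernoulliFun (Ioi 0) := fun _ hv =>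
  (hasDerivAt_bernoulliFun (ne_of_gt hv)).continuousAt.continuousWithinAt

theorem strictMonoOn_bernoulliFun : StrictMonoOn bernoulliFun (Ici 1) := by
  refine strictMonoOn_of_hasDerivWithinAt_pos (convex_Ici 1)
    (continuousOn_bernoulliFun.mono fun v hv => mem_Ioi.2 (lt_of_lt_of_le one_pos hv))
    (fun v hv => (hasDerivAt_bernoulliFun ?_).hasDerivWithinAt) fun v hv => ?_
  all_goals rw [interior_Ici] at hv
  · exact ne_of_gt (lt_trans one_pos hv)
  · exact div_pos (by nlinarith [mem_Ioi.1 hv]) (lt_trans one_pos hv)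

theorem strictAntiOn_bernoulliFun : StrictAntiOn bernoulliFun (Ioc 0 1) := by
  refine strictAntiOn_of_hasDerivWithinAt_neg (convex_Ioc 0 1)
    (continuousOn_bernoulliFun.mono Ioc_subset_Ioi_self)
    (fun v hv => (hasDerivAt_bernoulliFun ?_).hasDerivWithinAt) fun v hv => ?_
  all_goals rw [interior_Ioc] at hv
  · exact ne_of_gt hv.1
  · exact div_neg_of_neg_of_pos (by nlinarith [hv.1, hv.2]) hv.1

theorem surjOn_bernoulliFun_Ioi : SurjOn bernoulliFun (Ioi 1) (Ioi (1 / 2)) := by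
  intro y (hy : 1 / 2 < y)
  have hc : y ≤ bernoulliFun (2 * y + 1) := by
    have := log_le_sub_one_of_pos (show 0 < 2 * y + 1 by linarith)
    simp only [bernoulliFun]
    nlinarith
  obtain ⟨v, hv, rfl⟩ := intermediate_value_Ioc (show (1 : ℝ) ≤ 2 * y + 1 by linarith)
    (continuousOn_bernoulliFun.mono fun v hv => mem_Ioi.2 (lt_of_lt_of_le one_pos hv.1))
    ⟨bernoulliFun_one ▸ hy, hc⟩
  exact ⟨v, hv.1, rfl⟩

theorem surjOn_bernoulliFun_Ioo : SurjOn bernoulliFun (Ioo 0 1) (Ioi (1 / 2)) := by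
  intro y (hy : 1 / 2 < y)
  have hc : y ≤ bernoulliFun (exp (-y)) := by
    simp only [bernoulliFun, log_exp]
    nlinarith [sq_nonneg (exp (-y))]
  obtain ⟨v, hv, rfl⟩ := intermediate_value_Ico' (exp_lt_one_iff.2 (by linarith)).le
    (continuousOn_bernoulliFun.mono fun v hv => mem_Ioi.2 (lt_of_lt_of_le (exp_pos _) hv.1))
    ⟨bernoulliFun_one ▸ hy, hc⟩
  exact ⟨v, ⟨lt_of_lt_of_le (exp_pos _) hv.1, hv.2⟩, rfl⟩

def flowRegime (um : ℝ) : Set ℝ := if 1 < um then Ioi 1 else Ioo 0 1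

theorem isOpen_flowRegime (um : ℝ) : IsOpen (flowRegime um) := by
  unfold flowRegime
  split_ifs
  exacts [isOpen_Ioi, isOpen_Ioo]

theorem mem_flowRegime {um : ℝ} (hum : 0 < um) (hum1 : um ≠ 1) : um ∈ flowRegime um := by
  unfold flowRegime
  split_ifs with h
  exacts [h, ⟨hum, lt_of_le_of_ne (not_lt.1 h) hum1⟩]

theorem pos_of_mem_flowRegime {um v : ℝ} (hv : v ∈ flowRegime um) : 0 < v := by
  unfold flowRegime at hv
  split_ifs at hv
  exacts [lt_trans one_pos hv, hv.1]

theorem sq_ne_one_of_mem_flowRegime {um v : ℝ} (hv : v ∈ flowRegime um) : v ^ 2 ≠ 1 := by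
  rw [Ne, pow_eq_one_iff_of_nonneg (pos_of_mem_flowRegime hv).le two_ne_zero]
  unfold flowRegime at hv
  split_ifs at hv
  exacts [ne_of_gt hv, ne_of_lt hv.2]

theorem strictMonoOn_or_strictAntiOn_flowRegime (um : ℝ) :
    StrictMonoOn bernoulliFun (flowRegime um) ∨ StrictAntiOn bernoulliFun (flowRegime um) := by
  unfold flowRegime
  split_ifs
  exacts [Or.inl (strictMonoOn_bernoulliFun.mono Ioi_subset_Ici_self),
    Or.inr (strictAntiOn_bernoulliFun.mono Ioo_subset_Ioc_self)]

theorem bijOn_flowRegime (um : ℝ) : BijOn bernoulliFun (flowRegime um) (Ioi (1 / 2)) := by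
  refine ⟨fun v hv => ?_, (strictMonoOn_or_strictAntiOn_flowRegime um).elim
    StrictMonoOn.injOn StrictAntiOn.injOn, ?_⟩
  · show 1 / 2 < bernoulliFun v
    rw [← bernoulliFun_one]
    unfold flowRegime at hv
    split_ifs at hv
    · exact strictMonoOn_bernoulliFun (le_refl (1 : ℝ)) (mem_Ici.2 hv.le) hv
    · exact strictAntiOn_bernoulliFun ⟨hv.1, hv.2.le⟩ ⟨one_pos, le_rfl⟩ hv.2
  · unfold flowRegime
    split_ifs
    exacts [surjOn_bernoulliFun_Ioi, surjOn_bernoulliFun_Ioo]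

theorem lt_of_bernoulliFun_lt {um v : ℝ} (hum : 0 < um) (hum1 : um ≠ 1)
    (hv : v ∈ flowRegime um) (h : bernoulliFun um < bernoulliFun v) :
    (1 < um → um < v) ∧ (um < 1 → v < um) := by
  have hum' := mem_flowRegime hum hum1
  unfold flowRegime at hv hum'
  split_ifs at hv hum' with h1
  · exact ⟨fun _ => (strictMonoOn_bernoulliFun.lt_iff_lt (mem_Ici.2 hum'.le)
      (mem_Ici.2 hv.le)).1 h, fun h2 => absurd h1 (not_lt.2 h2.le)⟩
  · exact ⟨fun h2 => absurd h2 h1, fun _ => (strictAntiOn_bernoulliFun.lt_iff_gt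
      ⟨hum'.1, hum'.2.le⟩ ⟨hv.1, hv.2.le⟩).1 h⟩

theorem hasDerivAt_invFunOn_bernoulliFun (um : ℝ) {y : ℝ} (hy : 1 / 2 < y) :
    HasDerivAt (invFunOn bernoulliFun (flowRegime um))
      (invFunOn bernoulliFun (flowRegime um) y /
        (invFunOn bernoulliFun (flowRegime um) y ^ 2 - 1)) y := by
  have hv := (bijOn_flowRegime um).surjOn.mapsTo_invFunOn (show y ∈ Ioi (1 / 2) from hy)
  rw [← inv_div]
  exact hasDerivAt_invFunOn (bijOn_flowRegime um) (strictMonoOn_or_strictAntiOn_flowRegime um)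
    (isOpen_flowRegime um) (Ioi_mem_nhds hy)
    (hasDerivAt_bernoulliFun (pos_of_mem_flowRegime hv).ne')
    (div_ne_zero (sub_ne_zero.2 (sq_ne_one_of_mem_flowRegime hv)) (pos_of_mem_flowRegime hv).ne')

variable {L x₀ um : ℝ} {a a' : ℝ → ℝ}

noncomputable def velocity (a : ℝ → ℝ) (x₀ um x : ℝ) : ℝ :=
  invFunOn bernoulliFun (flowRegime um) (bernoulliFun um + log (a x) - log (a x₀))

noncomputable def density (ρm um v : ℝ) : ℝ := ρm * exp ((um ^ 2 - v ^ 2) / 2)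

theorem half_lt_bernoulliFun_add_log_sub_log (hapos : ∀ x ∈ Icc x₀ L, 0 < a x)
    (hmono : MonotoneOn a (Icc x₀ L)) (hum : 0 < um) (hum1 : um ≠ 1) {x : ℝ}
    (hx : x ∈ Icc x₀ L) : 1 / 2 < bernoulliFun um + log (a x) - log (a x₀) := by
  have hx₀ : x₀ ∈ Icc x₀ L := left_mem_Icc.2 (hx.1.trans hx.2)
  have h1 : 1 / 2 < bernoulliFun um := (bijOn_flowRegime um).mapsTo (mem_flowRegime hum hum1)
  have h2 : log (a x₀) ≤ log (a x) := log_le_log (hapos x₀ hx₀) (hmono hx₀ hx hx.1)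
  linarith

theorem velocity_mem_flowRegime (hapos : ∀ x ∈ Icc x₀ L, 0 < a x)
    (hmono : MonotoneOn a (Icc x₀ L)) (hum : 0 < um) (hum1 : um ≠ 1) {x : ℝ}
    (hx : x ∈ Icc x₀ L) : velocity a x₀ um x ∈ flowRegime um :=
  (bijOn_flowRegime um).surjOn.mapsTo_invFunOn
    (half_lt_bernoulliFun_add_log_sub_log hapos hmono hum hum1 hx)

theorem bernoulliFun_velocity (hapos : ∀ x ∈ Icc x₀ L, 0 < a x)
    (hmono : MonotoneOn a (Icc x₀ L)) (hum : 0 < um) (hum1 : um ≠ 1) {x : ℝ}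
    (hx : x ∈ Icc x₀ L) :
    bernoulliFun (velocity a x₀ um x) = bernoulliFun um + log (a x) - log (a x₀) :=
  (bijOn_flowRegime um).invOn_invFunOn.2
    (half_lt_bernoulliFun_add_log_sub_log hapos hmono hum hum1 hx)

theorem velocity_self (hum : 0 < um) (hum1 : um ≠ 1) : velocity a x₀ um x₀ = um := by
  rw [velocity, add_sub_cancel_right]
  exact (bijOn_flowRegime um).invOn_invFunOn.1 (mem_flowRegime hum hum1)

theorem hasDerivWithinAt_velocity (ha : ∀ x ∈ Icc x₀ L, HasDerivWithinAt a (a' x) (Icc x₀ L) x)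
    (hapos : ∀ x ∈ Icc x₀ L, 0 < a x) (hmono : MonotoneOn a (Icc x₀ L)) (hum : 0 < um)
    (hum1 : um ≠ 1) :
    ∀ x ∈ Icc x₀ L, HasDerivWithinAt (velocity a x₀ um)
      (a' x / a x * (velocity a x₀ um x / (velocity a x₀ um x ^ 2 - 1))) (Icc x₀ L) x := by
  intro x hx
  have hW : HasDerivWithinAt (fun x => bernoulliFun um + log (a x) - log (a x₀))
      (a' x / a x) (Icc x₀ L) x :=
    (((ha x hx).log (hapos x hx).ne').const_add _).sub_const _
  rw [mul_comm]
  exact (hasDerivAt_invFunOn_bernoulliFun um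
    (half_lt_bernoulliFun_add_log_sub_log hapos hmono hum hum1 hx)).comp_hasDerivWithinAt x hW

theorem contDiffOn_velocity (hx₀L : x₀ < L)
    (ha : ∀ x ∈ Icc x₀ L, HasDerivWithinAt a (a' x) (Icc x₀ L) x)
    (ha'cont : ContinuousOn a' (Icc x₀ L)) (hapos : ∀ x ∈ Icc x₀ L, 0 < a x)
    (hmono : MonotoneOn a (Icc x₀ L)) (hum : 0 < um) (hum1 : um ≠ 1) :
    ContDiffOn ℝ 1 (velocity a x₀ um) (Icc x₀ L) := by
  have hu := hasDerivWithinAt_velocity ha hapos hmono hum hum1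
  have hcu : ContinuousOn (velocity a x₀ um) (Icc x₀ L) := fun x hx =>
    (hu x hx).continuousWithinAt
  have hca : ContinuousOn a (Icc x₀ L) := fun x hx => (ha x hx).continuousWithinAt
  refine contDiffOn_one_of_hasDerivWithinAt (uniqueDiffOn_Icc hx₀L) hu
    ((ha'cont.div hca fun x hx => (hapos x hx).ne').mul
      (hcu.div ((hcu.pow 2).sub continuousOn_const) fun x hx => sub_ne_zero.2 ?_))
  exact sq_ne_one_of_mem_flowRegime (velocity_mem_flowRegime hapos hmono hum hum1 hx)

theorem bernoulliFun_sub_log_eq {u : ℝ → ℝ}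
    (ha : ∀ x ∈ Icc x₀ L, HasDerivWithinAt a (a' x) (Icc x₀ L) x)
    (ha0 : ∀ x ∈ Icc x₀ L, a x ≠ 0)
    (hu : ∀ x ∈ Icc x₀ L, HasDerivWithinAt u (a' x / a x * (u x / (u x ^ 2 - 1))) (Icc x₀ L) x)
    {t : ℝ} (ht : t ∈ Icc x₀ L) (hut : ∀ r ∈ Icc x₀ t, u r ≠ 0 ∧ u r ^ 2 ≠ 1) :
    bernoulliFun (u t) - log (a t) = bernoulliFun (u x₀) - log (a x₀) := by
  have hsub : Icc x₀ t ⊆ Icc x₀ L := Icc_subset_Icc_right ht.2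
  refine eq_of_hasDerivWithinAt_eq_zero (f := fun r => bernoulliFun (u r) - log (a r))
    (fun r hr => ?_) t (right_mem_Icc.2 ht.1)
  obtain ⟨h0, h1⟩ := hut r hr
  refine ((((hasDerivAt_bernoulliFun h0).comp_hasDerivWithinAt r (hu r (hsub hr))).sub
    ((ha r (hsub hr)).log (ha0 r (hsub hr)))).mono hsub).congr_deriv ?_
  field_simp [sub_ne_zero.2 h1]
  ring

theorem eqOn_velocity {u : ℝ → ℝ}
    (ha : ∀ x ∈ Icc x₀ L, HasDerivWithinAt a (a' x) (Icc x₀ L) x)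
    (hapos : ∀ x ∈ Icc x₀ L, 0 < a x) (hmono : MonotoneOn a (Icc x₀ L)) (hum : 0 < um)
    (hum1 : um ≠ 1)
    (hu : ∀ x ∈ Icc x₀ L, HasDerivWithinAt u (a' x / a x * (u x / (u x ^ 2 - 1))) (Icc x₀ L) x)
    (hu₀ : u x₀ = um) : EqOn u (velocity a x₀ um) (Icc x₀ L) := by
  refine eqOn_Icc_of_eq_of_mapsTo (isOpen_flowRegime um)
    (fun x hx => (hu x hx).continuousWithinAt)
    (fun x hx => (hasDerivWithinAt_velocity ha hapos hmono hum hum1 x hx).continuousWithinAt)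
    (fun x hx => velocity_mem_flowRegime hapos hmono hum hum1 hx)
    (by rw [hu₀]; exact mem_flowRegime hum hum1) fun t ht hut => ?_
  have hcons := bernoulliFun_sub_log_eq ha (fun x hx => (hapos x hx).ne') hu ht fun r hr =>
    ⟨(pos_of_mem_flowRegime (hut hr)).ne', sq_ne_one_of_mem_flowRegime (hut hr)⟩
  refine (bijOn_flowRegime um).injOn (hut (right_mem_Icc.2 ht.1))
    (velocity_mem_flowRegime hapos hmono hum hum1 ht) ?_
  rw [bernoulliFun_velocity hapos hmono hum hum1 ht, ← hu₀]
  linarith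

theorem bernoulliFun_lt_bernoulliFun_velocity (hapos : ∀ x ∈ Icc x₀ L, 0 < a x)
    (hmono : StrictMonoOn a (Icc x₀ L)) (hum : 0 < um) (hum1 : um ≠ 1) {x : ℝ}
    (hx : x ∈ Ioc x₀ L) : bernoulliFun um < bernoulliFun (velocity a x₀ um x) := by
  have hxI : x ∈ Icc x₀ L := Ioc_subset_Icc_self hx
  have hx₀ : x₀ ∈ Icc x₀ L := left_mem_Icc.2 (hxI.1.trans hxI.2)
  rw [bernoulliFun_velocity hapos hmono.monotoneOn hum hum1 hxI]
  have := log_lt_log (hapos x₀ hx₀) (hmono hx₀ hxI hx.1)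
  linarith

theorem density_self (ρm um : ℝ) : density ρm um um = ρm := by simp [density]

theorem contDiff_density (ρm um : ℝ) : ContDiff ℝ 1 (density ρm um) := by
  unfold density
  fun_prop

theorem strictAntiOn_density {ρm : ℝ} (hρm : 0 < ρm) (um : ℝ) :
    StrictAntiOn (density ρm um) (Ici 0) := fun v hv w _ hvw =>
  mul_lt_mul_of_pos_left (exp_lt_exp.2 (by nlinarith [mem_Ici.1 hv])) hρm

theorem hasDerivWithinAt_density (ρm um : ℝ) {u : ℝ → ℝ} {k x : ℝ} {s : Set ℝ}
    (hu : HasDerivWithinAt u (k * (u x / (u x ^ 2 - 1))) s x) (hu1 : u x ^ 2 ≠ 1) :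
    HasDerivWithinAt (fun x => density ρm um (u x))
      (k * (density ρm um (u x) * u x ^ 2 / (1 - u x ^ 2))) s x := by
  refine ((((hu.pow 2).const_sub (um ^ 2)).div_const 2).exp.const_mul ρm).congr_deriv ?_
  have h1 : 1 - u x ^ 2 ≠ 0 := sub_ne_zero.2 hu1.symm
  have h2 : u x ^ 2 - 1 ≠ 0 := sub_ne_zero.2 hu1
  simp only [density, Pi.pow_apply]
  field_simp
  ring

theorem eq_density_of_hasDerivWithinAt {ρ u k : ℝ → ℝ}
    (hρ : ∀ x ∈ Icc x₀ L,
      HasDerivWithinAt ρ (k x * (ρ x * u x ^ 2 / (1 - u x ^ 2))) (Icc x₀ L) x)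
    (hu : ∀ x ∈ Icc x₀ L, HasDerivWithinAt u (k x * (u x / (u x ^ 2 - 1))) (Icc x₀ L) x)
    (hu1 : ∀ x ∈ Icc x₀ L, u x ^ 2 ≠ 1) :
    ∀ x ∈ Icc x₀ L, ρ x = density (ρ x₀) (u x₀) (u x) := by
  have hconst := eq_of_hasDerivWithinAt_eq_zero (f := fun x => ρ x * exp (u x ^ 2 / 2))
    fun x hx => ((hρ x hx).mul (((hu x hx).pow 2).div_const 2).exp).congr_deriv (by
      have h1 : 1 - u x ^ 2 ≠ 0 := sub_ne_zero.2 (hu1 x hx).symm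
      have h2 : u x ^ 2 - 1 ≠ 0 := sub_ne_zero.2 (hu1 x hx)
      field_simp
      ring)
  intro x hx
  rw [density, sub_div, exp_sub, ← mul_div_assoc, ← hconst x hx,
    mul_div_cancel_right₀ _ (exp_pos _).ne']

end Nozzle

open Nozzle in
theorem steady_flow_divergent_nozzle_general
    (L : ℝ) (a a' : ℝ → ℝ)
    (ha : ∀ x ∈ Set.Icc (0 : ℝ) L, HasDerivWithinAt a (a' x) (Set.Icc 0 L) x)
    (ha'cont : ContinuousOn a' (Set.Icc 0 L))
    (hapos : ∀ x ∈ Set.Icc (0 : ℝ) L, 0 < a x)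
    (ha'pos : ∀ x ∈ Set.Icc (0 : ℝ) L, 0 < a' x) :
    ∀ x₀ ∈ Set.Ico (0 : ℝ) L, ∀ ρm um : ℝ, 0 < ρm → 0 < um → um ≠ 1 →
      ∃ ρ u : ℝ → ℝ,
        ContDiffOn ℝ 1 ρ (Set.Icc x₀ L) ∧ ContDiffOn ℝ 1 u (Set.Icc x₀ L) ∧
        ρ x₀ = ρm ∧ u x₀ = um ∧
        (∀ x ∈ Set.Icc x₀ L,
            HasDerivWithinAt ρ (a' x / a x * (ρ x * u x ^ 2 / (1 - u x ^ 2)))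
              (Set.Icc x₀ L) x ∧
            HasDerivWithinAt u (a' x / a x * (u x / (u x ^ 2 - 1)))
              (Set.Icc x₀ L) x) ∧
        (∀ ρ₂ u₂ : ℝ → ℝ,
          (∀ x ∈ Set.Icc x₀ L,
              HasDerivWithinAt ρ₂ (a' x / a x * (ρ₂ x * u₂ x ^ 2 / (1 - u₂ x ^ 2)))
                (Set.Icc x₀ L) x ∧
              HasDerivWithinAt u₂ (a' x / a x * (u₂ x / (u₂ x ^ 2 - 1)))
                (Set.Icc x₀ L) x) →
          ρ₂ x₀ = ρm → u₂ x₀ = um →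
          ∀ x ∈ Set.Icc x₀ L, ρ₂ x = ρ x ∧ u₂ x = u x) ∧
        (∀ x ∈ Set.Ioc x₀ L,
          (1 < um → um < u x ∧ 0 < ρ x ∧ ρ x < ρm) ∧
          (um < 1 → 0 < u x ∧ u x < um ∧ ρm < ρ x)) := by
  intro x₀ hx₀ ρm um hρm hum hum1
  have hsub : Icc x₀ L ⊆ Icc 0 L := Icc_subset_Icc_left hx₀.1
  have haI : ∀ x ∈ Icc x₀ L, HasDerivWithinAt a (a' x) (Icc x₀ L) x := fun x hx =>
    (ha x (hsub hx)).mono hsub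
  have haposI : ∀ x ∈ Icc x₀ L, 0 < a x := fun x hx => hapos x (hsub hx)
  have hamono : StrictMonoOn a (Icc x₀ L) :=
    (strictMonoOn_Icc_of_hasDerivWithinAt_pos ha ha'pos).mono hsub
  set u := velocity a x₀ um
  have hu := hasDerivWithinAt_velocity haI haposI hamono.monotoneOn hum hum1
  have hmem : ∀ x ∈ Icc x₀ L, u x ∈ flowRegime um := fun x hx =>
    velocity_mem_flowRegime haposI hamono.monotoneOn hum hum1 hx
  have hu₀ : u x₀ = um := velocity_self hum hum1
  have hucd := contDiffOn_velocity hx₀.2 haI (ha'cont.mono hsub) haposI hamono.monotoneOn hum hum1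
  refine ⟨fun x => density ρm um (u x), u, (contDiff_density ρm um).comp_contDiffOn hucd, hucd,
    by simp only [hu₀, density_self], hu₀, fun x hx => ⟨hasDerivWithinAt_density ρm um (hu x hx)
      (sq_ne_one_of_mem_flowRegime (hmem x hx)), hu x hx⟩,
    fun ρ₂ u₂ h hρ₂₀ hu₂₀ x hx => ?_, fun x hx => ?_⟩
  · have hu₂ := eqOn_velocity haI haposI hamono.monotoneOn hum hum1 (fun x hx => (h x hx).2) hu₂₀
    refine ⟨?_, hu₂ hx⟩
    rw [eq_density_of_hasDerivWithinAt (fun x hx => (h x hx).1) (fun x hx => (h x hx).2)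
      (fun x hx => hu₂ hx ▸ sq_ne_one_of_mem_flowRegime (hmem x hx)) x hx, hρ₂₀, hu₂₀, hu₂ hx]
  · have hux := pos_of_mem_flowRegime (hmem x (Ioc_subset_Icc_self hx))
    obtain ⟨hsup, hsubs⟩ := lt_of_bernoulliFun_lt hum hum1 (hmem x (Ioc_subset_Icc_self hx))
      (bernoulliFun_lt_bernoulliFun_velocity haposI hamono hum hum1 hx)
    refine ⟨fun h => ⟨hsup h, mul_pos hρm (exp_pos _), ?_⟩, fun h => ⟨hux, hsubs h, ?_⟩⟩
    · exact (strictAntiOn_density hρm um hum.le hux.le (hsup h)).trans_eq (density_self ρm um)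
    · exact (density_self ρm um).symm.trans_lt
        (strictAntiOn_density hρm um hux.le hum.le (hsubs h))

theorem steady_flow_divergent_nozzle
    (L : ℝ) (hL : 0 < L) (a a' : ℝ → ℝ)
    (ha : ∀ x ∈ Set.Icc (0 : ℝ) L, HasDerivWithinAt a (a' x) (Set.Icc 0 L) x)
    (ha'cont : ContinuousOn a' (Set.Icc 0 L))
    (hapos : ∀ x ∈ Set.Icc (0 : ℝ) L, 0 < a x)
    (ha'pos : ∀ x ∈ Set.Icc (0 : ℝ) L, 0 < a' x) :
    ∀ x₀ ∈ Set.Ico (0 : ℝ) L, ∀ ρm um : ℝ, 0 < ρm → 0 < um → um ≠ 1 →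
      ∃ ρ u : ℝ → ℝ,
        ContDiffOn ℝ 1 ρ (Set.Icc x₀ L) ∧ ContDiffOn ℝ 1 u (Set.Icc x₀ L) ∧
        ρ x₀ = ρm ∧ u x₀ = um ∧
        (∀ x ∈ Set.Icc x₀ L,
            HasDerivWithinAt ρ (a' x / a x * (ρ x * u x ^ 2 / (1 - u x ^ 2)))
              (Set.Icc x₀ L) x ∧
            HasDerivWithinAt u (a' x / a x * (u x / (u x ^ 2 - 1)))
              (Set.Icc x₀ L) x) ∧
        (∀ ρ₂ u₂ : ℝ → ℝ,
          (∀ x ∈ Set.Icc x₀ L,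
              HasDerivWithinAt ρ₂ (a' x / a x * (ρ₂ x * u₂ x ^ 2 / (1 - u₂ x ^ 2)))
                (Set.Icc x₀ L) x ∧
              HasDerivWithinAt u₂ (a' x / a x * (u₂ x / (u₂ x ^ 2 - 1)))
                (Set.Icc x₀ L) x) →
          ρ₂ x₀ = ρm → u₂ x₀ = um →
          ∀ x ∈ Set.Icc x₀ L, ρ₂ x = ρ x ∧ u₂ x = u x) ∧
        (∀ x ∈ Set.Ioc x₀ L,
          (1 < um → um < u x ∧ 0 < ρ x ∧ ρ x < ρm) ∧
          (um < 1 → 0 < u x ∧ u x < um ∧ ρm < ρ x)) :=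
  steady_flow_divergent_nozzle_general L a a' ha ha'cont hapos ha'pos
end

section
/- Implicit zero curve of the dissipative right-hand side (Lemma A.1, part 1). There exist constants C_Ξ > 0 and ε₀ > 0, depending only on Ξ, such that whenever the perturbation functions ω_i (i = 1,2,3) satisfy ω_i(t+T, ψ) = ω_i(t, ψ) and ‖ω_i‖_{C¹} < ε₀, there exists a continuous function σ : ℝ → ℝ satisfying Ξ(σ(t), ω₁(t,σ(t)), ω₂(t,σ(t)), ω₃(t,σ(t))) = 0 for all t ∈ ℝ, together with the bound ‖σ‖ ≤ (1 + C_Ξ ε₀) (1/Ξ_{ψ,0}) Σ_{i=1}^{3} Ξ_{ω_i,0} ‖ω_i‖. -/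
/-!
Lemma A.1, part 1: implicit zero curve of the dissipative right-hand side Ξ.
-/

noncomputable section

/-- sup (C⁰) norm of a two-variable real function. -/
def supN2 (w : ℝ → ℝ → ℝ) : ℝ := ⨆ p : ℝ × ℝ, |w p.1 p.2|

/-- `w` is C¹ with C¹ norm strictly less than `ε`. -/
def C1NormLt (w : ℝ → ℝ → ℝ) (ε : ℝ) : Prop :=
  ContDiff ℝ 1 (fun p : ℝ × ℝ => w p.1 p.2) ∧
  ∀ t x : ℝ, |w t x| < ε ∧ |deriv (fun s => w s x) t| < ε ∧
    |deriv (fun y => w t y) x| < ε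

set_option maxHeartbeats 1600000 in
theorem lemmaA1_part1
    (Ξ : ℝ → ℝ → ℝ → ℝ → ℝ)
    (hΞsmooth : ContDiff ℝ (⊤ : ℕ∞) (fun p : ℝ × ℝ × ℝ × ℝ => Ξ p.1 p.2.1 p.2.2.1 p.2.2.2))
    (hΞ0 : Ξ 0 0 0 0 = 0)
    (hΞψ : deriv (fun s => Ξ s 0 0 0) 0 < 0) :
    ∃ CΞ > (0 : ℝ), ∃ ε₀ > (0 : ℝ),
      ∀ T : ℝ, 0 < T →
      ∀ ω1 ω2 ω3 : ℝ → ℝ → ℝ,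
        ω1 0 0 = 0 → ω2 0 0 = 0 → ω3 0 0 = 0 →
        (∀ t ψ, ω1 (t + T) ψ = ω1 t ψ) → (∀ t ψ, ω2 (t + T) ψ = ω2 t ψ) →
        (∀ t ψ, ω3 (t + T) ψ = ω3 t ψ) →
        C1NormLt ω1 ε₀ → C1NormLt ω2 ε₀ → C1NormLt ω3 ε₀ →
        ∃ σ : ℝ → ℝ, Continuous σ ∧
          (∀ t, Ξ (σ t) (ω1 t (σ t)) (ω2 t (σ t)) (ω3 t (σ t)) = 0) ∧
          ∀ t, |σ t| ≤
            (1 + CΞ * ε₀) * (1 / |deriv (fun s => Ξ s 0 0 0) 0|) *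
              ((1 + |deriv (fun s => Ξ 0 s 0 0) 0|) * supN2 ω1 +
               (1 + |deriv (fun s => Ξ 0 0 s 0) 0|) * supN2 ω2 +
               (1 + |deriv (fun s => Ξ 0 0 0 s) 0|) * supN2 ω3) := by
  classical
  set Φ : ℝ × ℝ × ℝ × ℝ → ℝ := fun p => Ξ p.1 p.2.1 p.2.2.1 p.2.2.2 with hΦdef
  have hΦ1 : ContDiff ℝ 1 Φ := hΞsmooth.of_le (by simp)
  have hΦd : Differentiable ℝ Φ := hΦ1.differentiable one_ne_zero
  set D : (ℝ × ℝ × ℝ × ℝ) → (ℝ × ℝ × ℝ × ℝ) →L[ℝ] ℝ := fderiv ℝ Φ with hDdef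
  have hDc : Continuous D := hΞsmooth.continuous_fderiv (by simp)
  set e0 : ℝ × ℝ × ℝ × ℝ := (1, 0, 0, 0) with he0
  set e1 : ℝ × ℝ × ℝ × ℝ := (0, 1, 0, 0) with he1
  set e2 : ℝ × ℝ × ℝ × ℝ := (0, 0, 1, 0) with he2
  set e3 : ℝ × ℝ × ℝ × ℝ := (0, 0, 0, 1) with he3
  -- chain rule helper
  have key : ∀ (g : ℝ → ℝ × ℝ × ℝ × ℝ) (v : ℝ × ℝ × ℝ × ℝ) (s : ℝ),
      HasDerivAt g v s → HasDerivAt (fun u => Φ (g u)) (D (g s) v) s := by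
    intro g v s hg
    exact (hΦd (g s)).hasFDerivAt.comp_hasDerivAt s hg
  -- identify the four partials
  have h0 : deriv (fun s => Ξ s 0 0 0) 0 = D (0 : ℝ × ℝ × ℝ × ℝ) e0 := by
    have h := key (fun s => (s, (0:ℝ), (0:ℝ), (0:ℝ))) e0 0
      (HasDerivAt.prodMk (hasDerivAt_id (0:ℝ)) (hasDerivAt_const _ _))
    exact h.deriv
  have h1 : deriv (fun s => Ξ 0 s 0 0) 0 = D (0 : ℝ × ℝ × ℝ × ℝ) e1 := by
    have h := key (fun s => ((0:ℝ), s, (0:ℝ), (0:ℝ))) e1 0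
      (HasDerivAt.prodMk (hasDerivAt_const _ _) (HasDerivAt.prodMk (hasDerivAt_id (0:ℝ)) (hasDerivAt_const _ _)))
    exact h.deriv
  have h2 : deriv (fun s => Ξ 0 0 s 0) 0 = D (0 : ℝ × ℝ × ℝ × ℝ) e2 := by
    have h := key (fun s => ((0:ℝ), (0:ℝ), s, (0:ℝ))) e2 0
      (HasDerivAt.prodMk (hasDerivAt_const _ _) (HasDerivAt.prodMk (hasDerivAt_const _ _)
        (HasDerivAt.prodMk (hasDerivAt_id (0:ℝ)) (hasDerivAt_const _ _))))
    exact h.deriv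
  have h3 : deriv (fun s => Ξ 0 0 0 s) 0 = D (0 : ℝ × ℝ × ℝ × ℝ) e3 := by
    have h := key (fun s => ((0:ℝ), (0:ℝ), (0:ℝ), s)) e3 0
      (HasDerivAt.prodMk (hasDerivAt_const _ _) (HasDerivAt.prodMk (hasDerivAt_const _ _)
        (HasDerivAt.prodMk (hasDerivAt_const _ _) (hasDerivAt_id (0:ℝ)))))
    exact h.deriv
  -- linear decomposition of D p
  have hdec : ∀ (p : ℝ × ℝ × ℝ × ℝ) (a b c d : ℝ),
      D p (a, b, c, d) = a * D p e0 + b * D p e1 + c * D p e2 + d * D p e3 := by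
    intro p a b c d
    have hv : ((a, b, c, d) : ℝ × ℝ × ℝ × ℝ) = a • e0 + b • e1 + c • e2 + d • e3 := by
      simp [he0, he1, he2, he3, Prod.ext_iff]
    rw [hv, map_add, map_add, map_add, map_smul, map_smul, map_smul, map_smul]
    simp [smul_eq_mul]
  have hnorm_e0 : ‖e0‖ ≤ 1 := by simp [he0, Prod.norm_def]
  have hnorm_e1 : ‖e1‖ ≤ 1 := by simp [he1, Prod.norm_def]
  have hnorm_e2 : ‖e2‖ ≤ 1 := by simp [he2, Prod.norm_def]
  have hnorm_e3 : ‖e3‖ ≤ 1 := by simp [he3, Prod.norm_def]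
  -- the constants
  set A0 : ℝ := |D (0 : ℝ × ℝ × ℝ × ℝ) e0| with hA0def
  have hΞψ' : D (0 : ℝ × ℝ × ℝ × ℝ) e0 < 0 := by rw [← h0]; exact hΞψ
  have hA0pos : 0 < A0 := abs_pos.mpr (ne_of_lt hΞψ')
  have hD0e0 : D (0 : ℝ × ℝ × ℝ × ℝ) e0 = -A0 := by
    rw [hA0def, abs_of_neg hΞψ']; ring
  set A1 : ℝ := |D (0 : ℝ × ℝ × ℝ × ℝ) e1| with hA1def
  set A2 : ℝ := |D (0 : ℝ × ℝ × ℝ × ℝ) e2| with hA2def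
  set A3 : ℝ := |D (0 : ℝ × ℝ × ℝ × ℝ) e3| with hA3def
  have hA1nn : 0 ≤ A1 := abs_nonneg _
  have hA2nn : 0 ≤ A2 := abs_nonneg _
  have hA3nn : 0 ≤ A3 := abs_nonneg _
  set θ : ℝ := min 1 (A0 / 4) with hθdef
  have hθpos : 0 < θ := lt_min one_pos (by linarith)
  have hθ1 : θ ≤ 1 := min_le_left _ _
  have hθA : θ ≤ A0 / 4 := min_le_right _ _
  -- δ from continuity of D at 0
  obtain ⟨δ', hδ'pos, hδ'⟩ := Metric.continuousAt_iff.mp (hDc.continuousAt (x := 0)) θ hθpos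
  set δ : ℝ := δ' / 2 with hδdef
  have hδpos : 0 < δ := by positivity
  have hball : ∀ p : ℝ × ℝ × ℝ × ℝ, ‖p‖ ≤ δ → ‖D p - D 0‖ ≤ θ := by
    intro p hp
    have hd : dist p 0 < δ' := by
      rw [dist_zero_right]; rw [hδdef] at hp; linarith
    have h := hδ' hd
    rw [dist_eq_norm] at h
    exact h.le
  -- componentwise bounds on the ball
  have hcomp : ∀ p : ℝ × ℝ × ℝ × ℝ, ‖p‖ ≤ δ → ∀ e : ℝ × ℝ × ℝ × ℝ, ‖e‖ ≤ 1 →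
      |D p e - D 0 e| ≤ θ := by
    intro p hp e he
    have h := (D p - D 0).le_opNorm e
    rw [ContinuousLinearMap.sub_apply] at h
    have h2 : ‖D p - D 0‖ * ‖e‖ ≤ θ * 1 :=
      mul_le_mul (hball p hp) he (norm_nonneg _) hθpos.le
    calc |D p e - D 0 e| ≤ ‖D p - D 0‖ * ‖e‖ := h
      _ ≤ θ * 1 := h2
      _ = θ := mul_one _
  set M : ℝ := ‖D (0 : ℝ × ℝ × ℝ × ℝ)‖ + 1 with hMdef
  have hMpos : 0 < M := by positivity
  have hMbound : ∀ p : ℝ × ℝ × ℝ × ℝ, ‖p‖ ≤ δ → ∀ e : ℝ × ℝ × ℝ × ℝ, ‖e‖ ≤ 1 →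
      |D p e| ≤ M := by
    intro p hp e he
    have hθe := hcomp p hp e he
    have h2 : |D 0 e| ≤ ‖D (0 : ℝ × ℝ × ℝ × ℝ)‖ := by
      calc |D 0 e| ≤ ‖D (0 : ℝ × ℝ × ℝ × ℝ)‖ * ‖e‖ := (D 0).le_opNorm e
        _ ≤ ‖D (0 : ℝ × ℝ × ℝ × ℝ)‖ * 1 := mul_le_mul_of_nonneg_left he (norm_nonneg _)
        _ = _ := mul_one _
    have h3 : |D p e| - |D 0 e| ≤ |D p e - D 0 e| := abs_sub_abs_le_abs_sub _ _
    rw [hMdef]; linarith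
  set S : ℝ := (1 + A1) + (1 + A2) + (1 + A3) with hSdef
  have hSpos : 0 < S := by rw [hSdef]; linarith
  set ε₀ : ℝ := min (min δ (A0 / (24 * M))) (A0 * δ / (4 * S)) with hε₀def
  have hε₀pos : 0 < ε₀ :=
    lt_min (lt_min hδpos (by positivity)) (by positivity)
  have hε₀δ : ε₀ ≤ δ := le_trans (min_le_left _ _) (min_le_left _ _)
  have hε₀M : ε₀ ≤ A0 / (24 * M) := le_trans (min_le_left _ _) (min_le_right _ _)
  have hε₀S : ε₀ ≤ A0 * δ / (4 * S) := min_le_right _ _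
  set c : ℝ := A0 / 2 with hcdef
  have hcpos : 0 < c := by rw [hcdef]; linarith
  clear_value A0 A1 A2 A3 θ δ M S ε₀ c
  have hε₀M' : ε₀ * M ≤ A0 / 24 := by
    have h := (le_div_iff₀ (by positivity : (0:ℝ) < 24 * M)).mp hε₀M
    have h2 : ε₀ * (24 * M) = 24 * (ε₀ * M) := by ring
    linarith
  have hε₀S' : S * ε₀ ≤ A0 * δ / 4 := by
    have h := (le_div_iff₀ (by positivity : (0:ℝ) < 4 * S)).mp hε₀S
    have h2 : ε₀ * (4 * S) = 4 * (S * ε₀) := by ring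
    linarith
  refine ⟨1 / ε₀, by positivity, ε₀, hε₀pos, ?_⟩
  intro T hT ω1 ω2 ω3 hω10 hω20 hω30 hper1 hper2 hper3 hc1 hc2 hc3
  -- slice differentiability of the ω's
  have hslice : ∀ ω : ℝ → ℝ → ℝ, ContDiff ℝ 1 (fun p : ℝ × ℝ => ω p.1 p.2) →
      (∀ t : ℝ, Differentiable ℝ (fun y => ω t y)) ∧
      (∀ x : ℝ, Differentiable ℝ (fun s => ω s x)) := by
    intro ω hω
    constructor
    · intro t
      exact (hω.comp (contDiff_const.prodMk contDiff_id)).differentiable one_ne_zero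
    · intro x
      exact (hω.comp (contDiff_id.prodMk contDiff_const)).differentiable one_ne_zero
  obtain ⟨hω1y, hω1t⟩ := hslice ω1 hc1.1
  obtain ⟨hω2y, hω2t⟩ := hslice ω2 hc2.1
  obtain ⟨hω3y, hω3t⟩ := hslice ω3 hc3.1
  set f : ℝ → ℝ → ℝ := fun t ψ => Φ (ψ, ω1 t ψ, ω2 t ψ, ω3 t ψ) with hfdef
  set g : ℝ → ℝ → ℝ × ℝ × ℝ × ℝ := fun t ψ => (ψ, ω1 t ψ, ω2 t ψ, ω3 t ψ) with hgdef
  have hgball : ∀ t ψ : ℝ, |ψ| ≤ δ → ‖g t ψ‖ ≤ δ := by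
    intro t ψ hψ
    have b1 := (hc1.2 t ψ).1
    have b2 := (hc2.2 t ψ).1
    have b3 := (hc3.2 t ψ).1
    simp only [hgdef, Prod.norm_def, Real.norm_eq_abs]
    exact max_le hψ (max_le (by linarith) (max_le (by linarith) (by linarith)))
  -- derivative of f t in ψ
  have hfder : ∀ t ψ : ℝ, HasDerivAt (f t)
      (D (g t ψ) (1, deriv (fun y => ω1 t y) ψ, deriv (fun y => ω2 t y) ψ,
        deriv (fun y => ω3 t y) ψ)) ψ := by
    intro t ψ
    have hg : HasDerivAt (fun y => g t y)
        (1, deriv (fun y => ω1 t y) ψ, deriv (fun y => ω2 t y) ψ,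
          deriv (fun y => ω3 t y) ψ) ψ :=
      HasDerivAt.prodMk (hasDerivAt_id ψ) (HasDerivAt.prodMk ((hω1y t ψ).hasDerivAt)
        (HasDerivAt.prodMk ((hω2y t ψ).hasDerivAt) ((hω3y t ψ).hasDerivAt)))
    exact key (fun y => g t y) _ ψ hg
  have hfcont : ∀ t : ℝ, Continuous (f t) := fun t =>
    continuous_iff_continuousAt.mpr fun ψ => (hfder t ψ).differentiableAt.continuousAt
  -- generic product bound
  have hterm : ∀ d x B : ℝ, |d| ≤ ε₀ → |x| ≤ B → |d * x| ≤ ε₀ * B := by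
    intro d x B hd hx
    rw [abs_mul]
    exact mul_le_mul hd hx (abs_nonneg _) hε₀pos.le
  -- upper bound on ∂ψ f on [-δ, δ]
  have hderiv_le : ∀ t ψ : ℝ, |ψ| ≤ δ →
      D (g t ψ) (1, deriv (fun y => ω1 t y) ψ, deriv (fun y => ω2 t y) ψ,
        deriv (fun y => ω3 t y) ψ) ≤ -c := by
    intro t ψ hψ
    have hp := hgball t ψ hψ
    have hd1 : |deriv (fun y => ω1 t y) ψ| ≤ ε₀ := (hc1.2 t ψ).2.2.le
    have hd2 : |deriv (fun y => ω2 t y) ψ| ≤ ε₀ := (hc2.2 t ψ).2.2.le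
    have hd3 : |deriv (fun y => ω3 t y) ψ| ≤ ε₀ := (hc3.2 t ψ).2.2.le
    rw [hdec]
    have he0b : D (g t ψ) e0 ≤ -A0 + θ := by
      have h := abs_le.mp (hcomp (g t ψ) hp e0 hnorm_e0)
      rw [hD0e0] at h
      linarith [h.2]
    have ht1 : |deriv (fun y => ω1 t y) ψ * D (g t ψ) e1| ≤ ε₀ * M :=
      hterm _ _ _ hd1 (hMbound _ hp e1 hnorm_e1)
    have ht2 : |deriv (fun y => ω2 t y) ψ * D (g t ψ) e2| ≤ ε₀ * M :=
      hterm _ _ _ hd2 (hMbound _ hp e2 hnorm_e2)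
    have ht3 : |deriv (fun y => ω3 t y) ψ * D (g t ψ) e3| ≤ ε₀ * M :=
      hterm _ _ _ hd3 (hMbound _ hp e3 hnorm_e3)
    have l1 := (abs_le.mp ht1).2
    have l2 := (abs_le.mp ht2).2
    have l3 := (abs_le.mp ht3).2
    rw [hcdef]
    have := hε₀M'
    linarith
  -- slope estimate: f t decreases with slope at least c on [-δ, δ]
  have hslope : ∀ t x y : ℝ, x ∈ Set.Icc (-δ) δ → y ∈ Set.Icc (-δ) δ → x ≤ y →
      c * (y - x) ≤ f t x - f t y := by
    intro t x y hx hy hxy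
    set q : ℝ → ℝ := fun ψ => -(f t ψ) - c * ψ with hqdef
    have hq : ∀ ψ : ℝ, HasDerivAt q
        (-(D (g t ψ) (1, deriv (fun y => ω1 t y) ψ, deriv (fun y => ω2 t y) ψ,
          deriv (fun y => ω3 t y) ψ)) - c) ψ := by
      intro ψ
      have h1 := (hfder t ψ).neg
      have h2 : HasDerivAt (fun ψ : ℝ => c * ψ) c ψ := by
        simpa using (hasDerivAt_id ψ).const_mul c
      exact h1.sub h2
    have hmono : MonotoneOn q (Set.Icc (-δ) δ) := by
      apply monotoneOn_of_deriv_nonneg (convex_Icc _ _)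
      · exact (continuous_iff_continuousAt.mpr fun ψ =>
          (hq ψ).differentiableAt.continuousAt).continuousOn
      · intro ψ _
        exact ((hq ψ).differentiableAt).differentiableWithinAt
      · intro ψ hψ
        rw [interior_Icc, Set.mem_Ioo] at hψ
        rw [(hq ψ).deriv]
        have hb := hderiv_le t ψ (abs_le.mpr ⟨hψ.1.le, hψ.2.le⟩)
        linarith
    have := hmono hx hy hxy
    simp only [hqdef] at this
    linarith
  have habs_slope : ∀ t x y : ℝ, x ∈ Set.Icc (-δ) δ → y ∈ Set.Icc (-δ) δ →
      c * |x - y| ≤ |f t x - f t y| := by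
    intro t x y hx hy
    rcases le_total x y with h | h
    · have := hslope t x y hx hy h
      rw [abs_sub_comm, abs_of_nonneg (by linarith : (0:ℝ) ≤ y - x)]
      calc c * (y - x) ≤ f t x - f t y := this
        _ ≤ |f t x - f t y| := le_abs_self _
    · have := hslope t y x hy hx h
      rw [abs_of_nonneg (by linarith : (0:ℝ) ≤ x - y), abs_sub_comm]
      calc c * (x - y) ≤ f t y - f t x := this
        _ ≤ |f t y - f t x| := le_abs_self _
  -- bound |f t 0|
  have hft0 : ∀ t : ℝ, |f t 0| ≤
      (1 + A1) * |ω1 t 0| + (1 + A2) * |ω2 t 0| + (1 + A3) * |ω3 t 0| := by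
    intro t
    set a := ω1 t 0 with ha
    set b := ω2 t 0 with hb
    set c' := ω3 t 0 with hc'
    have haε : |a| ≤ ε₀ := (hc1.2 t 0).1.le
    have hbε : |b| ≤ ε₀ := (hc2.2 t 0).1.le
    have hcε : |c'| ≤ ε₀ := (hc3.2 t 0).1.le
    set h : ℝ → ℝ := fun u => Φ (0, u * a, u * b, u * c') with hhdef
    set h' : ℝ → ℝ := fun u => D ((0 : ℝ), u * a, u * b, u * c') ((0 : ℝ), a, b, c')
      with hh'def
    have hhder : ∀ u : ℝ, HasDerivAt h (h' u) u := by
      intro u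
      have hg : HasDerivAt (fun u : ℝ => ((0 : ℝ), u * a, u * b, u * c'))
          ((0 : ℝ), a, b, c') u :=
        HasDerivAt.prodMk (hasDerivAt_const _ _) (HasDerivAt.prodMk (hasDerivAt_mul_const a)
          (HasDerivAt.prodMk (hasDerivAt_mul_const b) (hasDerivAt_mul_const c')))
      exact key _ _ u hg
    have hbound : ∀ u ∈ Set.Icc (0 : ℝ) 1,
        ‖h' u‖ ≤ (1 + A1) * |a| + (1 + A2) * |b| + (1 + A3) * |c'| := by
      intro u hu
      have hu' : |u| ≤ 1 := abs_le.mpr ⟨by linarith [hu.1], hu.2⟩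
      have hpball : ‖((0 : ℝ), u * a, u * b, u * c')‖ ≤ δ := by
        simp only [Prod.norm_def, Real.norm_eq_abs, abs_zero]
        have h1 : |u * a| ≤ δ := by
          rw [abs_mul]
          calc |u| * |a| ≤ 1 * ε₀ := mul_le_mul hu' haε (abs_nonneg _) zero_le_one
            _ = ε₀ := one_mul _
            _ ≤ δ := hε₀δ
        have h2 : |u * b| ≤ δ := by
          rw [abs_mul]
          calc |u| * |b| ≤ 1 * ε₀ := mul_le_mul hu' hbε (abs_nonneg _) zero_le_one
            _ = ε₀ := one_mul _
            _ ≤ δ := hε₀δ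
        have h3 : |u * c'| ≤ δ := by
          rw [abs_mul]
          calc |u| * |c'| ≤ 1 * ε₀ := mul_le_mul hu' hcε (abs_nonneg _) zero_le_one
            _ = ε₀ := one_mul _
            _ ≤ δ := hε₀δ
        exact max_le hδpos.le (max_le h1 (max_le h2 h3))
      set p := ((0 : ℝ), u * a, u * b, u * c') with hp
      have hdecp : D p ((0 : ℝ), a, b, c') =
          0 * D p e0 + a * D p e1 + b * D p e2 + c' * D p e3 := hdec p 0 a b c'
      have hA1b : |D p e1| ≤ A1 + 1 := by
        have h := hcomp p hpball e1 hnorm_e1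
        have h2 := abs_sub_abs_le_abs_sub (D p e1) (D (0 : ℝ × ℝ × ℝ × ℝ) e1)
        linarith [hA1def.ge, hA1def.le]
      have hA2b : |D p e2| ≤ A2 + 1 := by
        have h := hcomp p hpball e2 hnorm_e2
        have h2 := abs_sub_abs_le_abs_sub (D p e2) (D (0 : ℝ × ℝ × ℝ × ℝ) e2)
        linarith [hA2def.ge, hA2def.le]
      have hA3b : |D p e3| ≤ A3 + 1 := by
        have h := hcomp p hpball e3 hnorm_e3
        have h2 := abs_sub_abs_le_abs_sub (D p e3) (D (0 : ℝ × ℝ × ℝ × ℝ) e3)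
        linarith [hA3def.ge, hA3def.le]
      rw [hh'def]
      simp only [Real.norm_eq_abs]
      rw [hdecp, zero_mul, zero_add]
      calc |a * D p e1 + b * D p e2 + c' * D p e3|
          ≤ |a * D p e1 + b * D p e2| + |c' * D p e3| := abs_add_le _ _
        _ ≤ |a * D p e1| + |b * D p e2| + |c' * D p e3| := by
            linarith [abs_add_le (a * D p e1) (b * D p e2)]
        _ = |a| * |D p e1| + |b| * |D p e2| + |c'| * |D p e3| := by
            rw [abs_mul, abs_mul, abs_mul]
        _ ≤ |a| * (A1 + 1) + |b| * (A2 + 1) + |c'| * (A3 + 1) := by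
            gcongr <;> first | exact hA1b | exact hA2b | exact hA3b
        _ = (1 + A1) * |a| + (1 + A2) * |b| + (1 + A3) * |c'| := by ring
    have hmvt := Convex.norm_image_sub_le_of_norm_hasDerivWithin_le
      (f := h) (f' := h')
      (fun u hu => (hhder u).hasDerivWithinAt)
      hbound (convex_Icc 0 1)
      (Set.left_mem_Icc.mpr zero_le_one) (Set.right_mem_Icc.mpr zero_le_one)
    have hh1 : h 1 = f t 0 := by simp [hhdef, hfdef, ha, hb, hc']
    have hh0 : h 0 = 0 := by
      simp only [hhdef, zero_mul]
      exact hΞ0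
    rw [hh1, hh0, sub_zero] at hmvt
    simpa using hmvt
  -- t-Lipschitz bound of f at fixed ψ
  have hLipt : ∀ s t ψ : ℝ, |ψ| ≤ δ → |f t ψ - f s ψ| ≤ (3 * M * ε₀) * |t - s| := by
    intro s t ψ hψ
    set h' : ℝ → ℝ := fun u => D (g u ψ)
      ((0 : ℝ), deriv (fun r => ω1 r ψ) u, deriv (fun r => ω2 r ψ) u,
        deriv (fun r => ω3 r ψ) u) with hh'def
    have hhder : ∀ u : ℝ, HasDerivAt (fun r => f r ψ) (h' u) u := by
      intro u
      have hg : HasDerivAt (fun r => g r ψ)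
          ((0 : ℝ), deriv (fun r => ω1 r ψ) u, deriv (fun r => ω2 r ψ) u,
            deriv (fun r => ω3 r ψ) u) u :=
        HasDerivAt.prodMk (hasDerivAt_const _ _) (HasDerivAt.prodMk ((hω1t ψ u).hasDerivAt)
          (HasDerivAt.prodMk ((hω2t ψ u).hasDerivAt) ((hω3t ψ u).hasDerivAt)))
      exact key _ _ u hg
    have hbound : ∀ u : ℝ, ‖h' u‖ ≤ 3 * M * ε₀ := by
      intro u
      have hp := hgball u ψ hψ
      have hb1 : |deriv (fun r => ω1 r ψ) u| ≤ ε₀ := (hc1.2 u ψ).2.1.le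
      have hb2 : |deriv (fun r => ω2 r ψ) u| ≤ ε₀ := (hc2.2 u ψ).2.1.le
      have hb3 : |deriv (fun r => ω3 r ψ) u| ≤ ε₀ := (hc3.2 u ψ).2.1.le
      have ht1 := hterm _ _ _ hb1 (hMbound _ hp e1 hnorm_e1)
      have ht2 := hterm _ _ _ hb2 (hMbound _ hp e2 hnorm_e2)
      have ht3 := hterm _ _ _ hb3 (hMbound _ hp e3 hnorm_e3)
      simp only [hh'def, Real.norm_eq_abs]
      rw [hdec, zero_mul, zero_add]
      calc |deriv (fun r => ω1 r ψ) u * D (g u ψ) e1 +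
            deriv (fun r => ω2 r ψ) u * D (g u ψ) e2 +
            deriv (fun r => ω3 r ψ) u * D (g u ψ) e3|
          ≤ |deriv (fun r => ω1 r ψ) u * D (g u ψ) e1 +
              deriv (fun r => ω2 r ψ) u * D (g u ψ) e2| +
            |deriv (fun r => ω3 r ψ) u * D (g u ψ) e3| := abs_add_le _ _
        _ ≤ |deriv (fun r => ω1 r ψ) u * D (g u ψ) e1| +
            |deriv (fun r => ω2 r ψ) u * D (g u ψ) e2| +
            |deriv (fun r => ω3 r ψ) u * D (g u ψ) e3| := by
              linarith [abs_add_le (deriv (fun r => ω1 r ψ) u * D (g u ψ) e1)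
                (deriv (fun r => ω2 r ψ) u * D (g u ψ) e2)]
        _ ≤ ε₀ * M + ε₀ * M + ε₀ * M := by linarith
        _ = 3 * M * ε₀ := by ring
    have hmvt := Convex.norm_image_sub_le_of_norm_hasDerivWithin_le
      (f := fun r => f r ψ) (f' := h') (s := Set.univ)
      (fun u _ => (hhder u).hasDerivWithinAt)
      (fun u _ => hbound u) convex_univ (Set.mem_univ s) (Set.mem_univ t)
    simpa [Real.norm_eq_abs] using hmvt
  -- bound S ε₀ for f t 0
  have hft0S : ∀ t : ℝ, |f t 0| ≤ S * ε₀ := by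
    intro t
    have h := hft0 t
    have h1 : (1 + A1) * |ω1 t 0| ≤ (1 + A1) * ε₀ :=
      mul_le_mul_of_nonneg_left (hc1.2 t 0).1.le (by linarith)
    have h2 : (1 + A2) * |ω2 t 0| ≤ (1 + A2) * ε₀ :=
      mul_le_mul_of_nonneg_left (hc2.2 t 0).1.le (by linarith)
    have h3 : (1 + A3) * |ω3 t 0| ≤ (1 + A3) * ε₀ :=
      mul_le_mul_of_nonneg_left (hc3.2 t 0).1.le (by linarith)
    have hSe : S * ε₀ = (1 + A1) * ε₀ + (1 + A2) * ε₀ + (1 + A3) * ε₀ := by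
      rw [hSdef]; ring
    linarith
  -- existence of a zero in [-δ, δ]
  have hmem0 : (0 : ℝ) ∈ Set.Icc (-δ) δ := by
    exact ⟨by linarith, by linarith⟩
  have hmemδ : δ ∈ Set.Icc (-δ) δ := by
    exact ⟨by linarith, by linarith⟩
  have hmemnδ : -δ ∈ Set.Icc (-δ) δ := by
    exact ⟨by linarith, by linarith⟩
  have hzero : ∀ t : ℝ, ∃ x ∈ Set.Icc (-δ) δ, f t x = 0 := by
    intro t
    have hS := hft0S t
    have hSδ : S * ε₀ < c * δ := by
      have hcδ : c * δ = A0 * δ / 2 := by rw [hcdef]; ring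
      have hpos : 0 < A0 * δ := mul_pos hA0pos hδpos
      linarith
    have hne : f t δ ≤ 0 := by
      have := hslope t 0 δ hmem0 hmemδ hδpos.le
      have hf0 := (abs_le.mp hS).2
      linarith
    have hpo : 0 ≤ f t (-δ) := by
      have := hslope t (-δ) 0 hmemnδ hmem0 (by linarith)
      have hf0 := (abs_le.mp hS).1
      linarith
    have hIVT := intermediate_value_Icc' (by linarith : -δ ≤ δ) (hfcont t).continuousOn
    have h0mem : (0 : ℝ) ∈ Set.Icc (f t δ) (f t (-δ)) := ⟨hne, hpo⟩
    obtain ⟨x, hx, hfx⟩ := hIVT h0mem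
    exact ⟨x, hx, hfx⟩
  set σ : ℝ → ℝ := fun t => (hzero t).choose with hσdef
  have hσmem : ∀ t : ℝ, σ t ∈ Set.Icc (-δ) δ := fun t => (hzero t).choose_spec.1
  have hσzero : ∀ t : ℝ, f t (σ t) = 0 := fun t => (hzero t).choose_spec.2
  have hσabs : ∀ t : ℝ, |σ t| ≤ δ := fun t =>
    abs_le.mpr ⟨(hσmem t).1, (hσmem t).2⟩
  -- the fundamental bound
  have hσb : ∀ t : ℝ, c * |σ t| ≤ |f t 0| := by
    intro t
    have h := habs_slope t (σ t) 0 (hσmem t) hmem0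
    rw [sub_zero, hσzero t, zero_sub, abs_neg] at h
    exact h
  -- continuity via Lipschitz
  have hσcont : Continuous σ := by
    have hK : ∀ x y : ℝ, |σ x - σ y| ≤ (3 * M * ε₀ / c) * |x - y| := by
      intro x y
      have h1 := habs_slope x (σ x) (σ y) (hσmem x) (hσmem y)
      rw [hσzero x, zero_sub, abs_neg] at h1
      have h2 : |f x (σ y)| = |f x (σ y) - f y (σ y)| := by rw [hσzero y, sub_zero]
      have h3 := hLipt y x (σ y) (hσabs y)
      have h4 : c * |σ x - σ y| ≤ (3 * M * ε₀) * |x - y| := by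
        rw [h2] at h1
        linarith
      rw [div_mul_eq_mul_div, le_div_iff₀ hcpos]
      linarith [mul_comm (|σ x - σ y|) c]
    apply LipschitzWith.continuous (K := (3 * M * ε₀ / c).toNNReal)
    apply LipschitzWith.of_dist_le_mul
    intro x y
    rw [Real.dist_eq, Real.dist_eq, Real.coe_toNNReal _ (by positivity)]
    exact hK x y
  refine ⟨σ, hσcont, fun t => hσzero t, ?_⟩
  intro t
  -- sup norm facts
  have hsup : ∀ ω : ℝ → ℝ → ℝ, C1NormLt ω ε₀ → |ω t 0| ≤ supN2 ω := by
    intro ω hω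
    have hbdd : BddAbove (Set.range fun p : ℝ × ℝ => |ω p.1 p.2|) := by
      refine ⟨ε₀, ?_⟩
      rintro _ ⟨p, rfl⟩
      exact (hω.2 p.1 p.2).1.le
    exact le_ciSup hbdd ((t, 0) : ℝ × ℝ)
  have hs1 := hsup ω1 hc1
  have hs2 := hsup ω2 hc2
  have hs3 := hsup ω3 hc3
  have hsn1 : 0 ≤ supN2 ω1 := le_trans (abs_nonneg _) hs1
  have hsn2 : 0 ≤ supN2 ω2 := le_trans (abs_nonneg _) hs2
  have hsn3 : 0 ≤ supN2 ω3 := le_trans (abs_nonneg _) hs3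
  -- chain of bounds
  set X : ℝ := (1 + A1) * supN2 ω1 + (1 + A2) * supN2 ω2 + (1 + A3) * supN2 ω3 with hXdef
  have hfX : |f t 0| ≤ X := by
    have h := hft0 t
    have h1 : (1 + A1) * |ω1 t 0| ≤ (1 + A1) * supN2 ω1 :=
      mul_le_mul_of_nonneg_left hs1 (by linarith)
    have h2 : (1 + A2) * |ω2 t 0| ≤ (1 + A2) * supN2 ω2 :=
      mul_le_mul_of_nonneg_left hs2 (by linarith)
    have h3 : (1 + A3) * |ω3 t 0| ≤ (1 + A3) * supN2 ω3 :=
      mul_le_mul_of_nonneg_left hs3 (by linarith)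
    rw [hXdef]; linarith
  have hmain : c * |σ t| ≤ X := le_trans (hσb t) hfX
  have hfinal : |σ t| ≤ 2 * (1 / A0) * X := by
    rw [hcdef] at hmain
    rw [show (2:ℝ) * (1 / A0) * X = (2 * X) / A0 by ring, le_div_iff₀ hA0pos]
    linarith
  -- rewrite the goal
  rw [h0, h1, h2, h3, ← hA0def, ← hA1def, ← hA2def, ← hA3def]
  have hCε : (1 : ℝ) / ε₀ * ε₀ = 1 := by
    rw [one_div, inv_mul_cancel₀ hε₀pos.ne']
  rw [hCε]
  calc |σ t| ≤ 2 * (1 / A0) * X := hfinal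
    _ = (1 + 1) * (1 / A0) * X := by ring
end
end

section
/- Comparison of flow maps for two sets of perturbation functions (Lemma A.2). Let ε₀ > 0 be as in Lemma A.1, and let ω_{1,i}, ω_{2,i} (i = 1,2,3) be two sets of perturbation functions (each C¹, T-periodic in t, vanishing at (0,0)) with ‖ω_{1,i}‖_{C¹} ≤ ε₀ and ‖ω_{2,i}‖_{C¹} ≤ ε₀. For j = 1, 2 let ψ̃_j(τ; t, x) denote the solution of dψ̃_j/dτ = Ξ(ψ̃_j, ω_{j,1}(t+τ, ψ̃_j), ω_{j,2}(t+τ, ψ̃_j), ω_{j,3}(t+τ, ψ̃_j)) with ψ̃_j(0; t, x) = x. Then there exist constants C̃_Ξ > 0 and C_Ξ > 0, depending only on Ξ, such that, setting σ̃* = (1 + C̃_Ξ ε₀)(1/Ξ_{ψ,0}) Σ_{i=1}^{3} Ξ_{ω_i,0} max(‖ω_{1,i}‖, ‖ω_{2,i}‖), for every τ ≥ 0, t ∈ ℝ and x ∈ [−σ̃*, σ̃*]: ψ̃_1(τ; t, x) ∈ [−σ̃*, σ̃*], ψ̃_2(τ; t, x) ∈ [−σ̃*, σ̃*], and |ψ̃_1(τ;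 t, x) − ψ̃_2(τ; t, x)| ≤ (1/Ξ_{ψ,0}) (exp((1 + C_Ξ ε₀) Ξ_{ψ,0} τ) − 1) Σ_{i=1}^{3} Ξ_{ω_i,0} ‖ω_{1,i} − ω_{2,i}‖. -/
/-!
Lemma A.2: comparison of the flow maps of the dissipative ODE for two sets of
perturbation functions.
-/

noncomputable section

/-- `w` is C¹ with C¹ norm at most `ε`. -/
def C1NormLe (w : ℝ → ℝ → ℝ) (ε : ℝ) : Prop :=
  ContDiff ℝ 1 (fun p : ℝ × ℝ => w p.1 p.2) ∧
  ∀ t x : ℝ, |w t x| ≤ ε ∧ |deriv (fun s => w s x) t| ≤ ε ∧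
    |deriv (fun y => w t y) x| ≤ ε

open Set Real Filter Topology

lemma supN2_ge {w : ℝ → ℝ → ℝ} {C : ℝ} (hC : ∀ t x, |w t x| ≤ C) (t x : ℝ) :
    |w t x| ≤ supN2 w :=
  le_ciSup (f := fun p : ℝ × ℝ => |w p.1 p.2|)
    ⟨C, by rintro y ⟨p, rfl⟩; exact hC p.1 p.2⟩ (t, x)

lemma supN2_nonneg {w : ℝ → ℝ → ℝ} {C : ℝ} (hC : ∀ t x, |w t x| ≤ C) : 0 ≤ supN2 w :=
  (abs_nonneg _).trans (supN2_ge hC 0 0)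

lemma supN2_le {w : ℝ → ℝ → ℝ} {C : ℝ} (hC : ∀ t x, |w t x| ≤ C) : supN2 w ≤ C :=
  ciSup_le fun p => hC p.1 p.2

lemma C1_lip {w : ℝ → ℝ → ℝ} {ε : ℝ} (h : C1NormLe w ε) (t a b : ℝ) :
    |w t a - w t b| ≤ ε * |a - b| := by
  have hdiff : ∀ y : ℝ, DifferentiableAt ℝ (fun y => w t y) y := by
    intro y
    have : DifferentiableAt ℝ ((fun p : ℝ × ℝ => w p.1 p.2) ∘ fun y : ℝ => (t, y)) y :=
      ((h.1.differentiable one_ne_zero) (t, y)).comp y (by fun_prop)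
    exact this
  have := Convex.norm_image_sub_le_of_norm_deriv_le (𝕜 := ℝ) (s := Set.univ)
    (f := fun y => w t y) (C := ε) (fun x _ => hdiff x)
    (fun x _ => (h.2 t x).2.2) convex_univ (mem_univ b) (mem_univ a)
  simpa [Real.norm_eq_abs] using this

lemma barrier_up {f d : ℝ → ℝ} (hf : ∀ τ, HasDerivAt f (d τ) τ) {B : ℝ}
    (h0 : f 0 ≤ B) (hB : ∀ τ, 0 ≤ τ → f τ = B → d τ < 0) :
    ∀ τ, 0 ≤ τ → f τ ≤ B := by
  intro τ₀ hτ₀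
  by_contra hgt
  push_neg at hgt
  have hcont : Continuous f := (Differentiable.continuous (fun τ => (hf τ).differentiableAt))
  set A : Set ℝ := Icc 0 τ₀ ∩ f ⁻¹' Iic B with hA
  have hAne : A.Nonempty := ⟨0, ⟨le_refl 0, hτ₀⟩, h0⟩
  have hAbdd : BddAbove A := ⟨τ₀, fun u hu => hu.1.2⟩
  have hAcl : IsClosed A := (isClosed_Icc).inter (isClosed_Iic.preimage hcont)
  set s := sSup A with hs
  have hsA : s ∈ A := hAcl.csSup_mem hAne hAbdd
  have hs0 : 0 ≤ s := hsA.1.1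
  have hsτ₀ : s < τ₀ := lt_of_le_of_ne hsA.1.2 (by
    intro h; exact absurd hsA.2 (by simp [h, not_le.mpr hgt]))
  have habove : ∀ u ∈ Ioc s τ₀, B < f u := by
    intro u hu
    by_contra hle
    push_neg at hle
    exact absurd (le_csSup hAbdd (⟨⟨hs0.trans hu.1.le, hu.2⟩, hle⟩ : u ∈ A)) (not_le.mpr hu.1)
  have hfs : f s = B := by
    refine le_antisymm hsA.2 ?_
    have htend : Tendsto f (𝓝[>] s) (𝓝 (f s)) :=
      (hcont.continuousAt.tendsto).mono_left nhdsWithin_le_nhds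
    refine ge_of_tendsto htend ?_
    filter_upwards [Ioc_mem_nhdsGT_of_mem ⟨le_refl s, hsτ₀⟩] with u hu
    exact (habove u hu).le
  have hneg : d s < 0 := hB s hs0 hfs
  have htslope : Tendsto (slope f s) (𝓝[>] s) (𝓝 (d s)) := by
    have h1 : HasDerivWithinAt f (d s) (Ioi s) s := (hf s).hasDerivWithinAt
    rw [hasDerivWithinAt_iff_tendsto_slope] at h1
    rwa [Set.diff_singleton_eq_self (by simp)] at h1
  have hpos : 0 ≤ d s := by
    refine ge_of_tendsto htslope ?_
    filter_upwards [Ioc_mem_nhdsGT_of_mem ⟨le_refl s, hsτ₀⟩] with u hu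
    have h1 : 0 < f u - f s := by rw [hfs]; linarith [habove u hu]
    have hu' : 0 < u - s := by linarith [hu.1]
    rw [slope_def_field]
    exact le_of_lt (div_pos h1 hu')
  linarith

abbrev E4 := ℝ × ℝ × ℝ × ℝ

lemma E4_norm_eq (p : E4) : ‖p‖ = max |p.1| (max |p.2.1| (max |p.2.2.1| |p.2.2.2|)) := by
  simp [Prod.norm_def, Real.norm_eq_abs]

lemma E4_comp1 (p : E4) : |p.1| ≤ ‖p‖ := by rw [E4_norm_eq]; apply le_max_left
lemma E4_comp2 (p : E4) : |p.2.1| ≤ ‖p‖ := by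
  rw [E4_norm_eq]; exact le_max_of_le_right (le_max_left _ _)
lemma E4_comp3 (p : E4) : |p.2.2.1| ≤ ‖p‖ := by
  rw [E4_norm_eq]; exact le_max_of_le_right (le_max_of_le_right (le_max_left _ _))
lemma E4_comp4 (p : E4) : |p.2.2.2| ≤ ‖p‖ := by
  rw [E4_norm_eq]; exact le_max_of_le_right (le_max_of_le_right (le_max_right _ _))

lemma E4_norm_le {p : E4} {c : ℝ} (h1 : |p.1| ≤ c) (h2 : |p.2.1| ≤ c)
    (h3 : |p.2.2.1| ≤ c) (h4 : |p.2.2.2| ≤ c) : ‖p‖ ≤ c := by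
  rw [E4_norm_eq]
  exact max_le h1 (max_le h2 (max_le h3 h4))

lemma E4_decomp (D : E4 →L[ℝ] ℝ) (p : E4) :
    D p = p.1 * D (1,0,0,0) + p.2.1 * D (0,1,0,0) + p.2.2.1 * D (0,0,1,0)
      + p.2.2.2 * D (0,0,0,1) := by
  have hp : p = p.1 • ((1:ℝ),(0:ℝ),(0:ℝ),(0:ℝ)) + p.2.1 • ((0:ℝ),(1:ℝ),(0:ℝ),(0:ℝ))
      + p.2.2.1 • ((0:ℝ),(0:ℝ),(1:ℝ),(0:ℝ)) + p.2.2.2 • ((0:ℝ),(0:ℝ),(0:ℝ),(1:ℝ)) := by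
    simp [Prod.ext_iff, Prod.smul_def, smul_eq_mul]
  calc D p = D (p.1 • ((1:ℝ),(0:ℝ),(0:ℝ),(0:ℝ)) + p.2.1 • ((0:ℝ),(1:ℝ),(0:ℝ),(0:ℝ))
      + p.2.2.1 • ((0:ℝ),(0:ℝ),(1:ℝ),(0:ℝ)) + p.2.2.2 • ((0:ℝ),(0:ℝ),(0:ℝ),(1:ℝ))) := by
        rw [← hp]
    _ = _ := by simp only [map_add, map_smul, smul_eq_mul]

lemma E4_D_abs (D : E4 →L[ℝ] ℝ) (p : E4) :
    |D p| ≤ |p.1| * |D (1,0,0,0)| + |p.2.1| * |D (0,1,0,0)| + |p.2.2.1| * |D (0,0,1,0)|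
      + |p.2.2.2| * |D (0,0,0,1)| := by
  rw [E4_decomp]
  calc |p.1 * D (1,0,0,0) + p.2.1 * D (0,1,0,0) + p.2.2.1 * D (0,0,1,0)
        + p.2.2.2 * D (0,0,0,1)|
      ≤ |p.1 * D (1,0,0,0) + p.2.1 * D (0,1,0,0) + p.2.2.1 * D (0,0,1,0)|
        + |p.2.2.2 * D (0,0,0,1)| := abs_add_le _ _
    _ ≤ (|p.1 * D (1,0,0,0) + p.2.1 * D (0,1,0,0)| + |p.2.2.1 * D (0,0,1,0)|)
        + |p.2.2.2 * D (0,0,0,1)| := by gcongr; exact abs_add_le _ _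
    _ ≤ ((|p.1 * D (1,0,0,0)| + |p.2.1 * D (0,1,0,0)|) + |p.2.2.1 * D (0,0,1,0)|)
        + |p.2.2.2 * D (0,0,0,1)| := by gcongr; exact abs_add_le _ _
    _ = _ := by simp [abs_mul]

lemma key_mvt {F : E4 → ℝ} (hF : ContDiff ℝ (⊤ : ℕ∞) F) {δ : ℝ} (hδ : 0 < δ) :
    ∃ r > (0:ℝ), ∀ p q : E4, ‖p‖ ≤ r → ‖q‖ ≤ r →
      |F p - F q - fderiv ℝ F 0 (p - q)| ≤ δ * ‖p - q‖ := by
  have hc : Continuous (fderiv ℝ F) := hF.continuous_fderiv (by simp)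
  have hca : ContinuousAt (fderiv ℝ F) 0 := hc.continuousAt
  rw [Metric.continuousAt_iff] at hca
  obtain ⟨r', hr', hball⟩ := hca δ hδ
  refine ⟨r'/2, by positivity, fun p q hp hq => ?_⟩
  set D := fderiv ℝ F 0 with hD
  set g : E4 → ℝ := fun x => F x - D x with hg
  have hgd : ∀ x ∈ Metric.closedBall (0:E4) (r'/2),
      HasFDerivWithinAt g (fderiv ℝ F x - D) (Metric.closedBall (0:E4) (r'/2)) x := by
    intro x _
    exact (((hF.differentiable (by simp) x).hasFDerivAt).sub D.hasFDerivAt).hasFDerivWithinAt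
  have hgb : ∀ x ∈ Metric.closedBall (0:E4) (r'/2), ‖fderiv ℝ F x - D‖ ≤ δ := by
    intro x hx
    have h1 : dist x 0 < r' := lt_of_le_of_lt (Metric.mem_closedBall.mp hx) (by linarith)
    have h2 := hball h1
    rw [dist_eq_norm] at h2
    exact h2.le
  have := Convex.norm_image_sub_le_of_norm_hasFDerivWithin_le hgd hgb
    (convex_closedBall _ _) (Metric.mem_closedBall.mpr (by simpa [dist_eq_norm] using hq))
    (Metric.mem_closedBall.mpr (by simpa [dist_eq_norm] using hp))
  have heq : g p - g q = F p - F q - D (p - q) := by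
    simp only [hg, map_sub]; ring
  rw [heq] at this
  simpa [Real.norm_eq_abs] using this

lemma deriv_slot1 {F : E4 → ℝ} (hF : ContDiff ℝ (⊤ : ℕ∞) F) :
    HasDerivAt (fun s : ℝ => F (s,0,0,0)) (fderiv ℝ F 0 (1,0,0,0)) 0 := by
  have hL : HasFDerivAt F (fderiv ℝ F 0) 0 := (hF.differentiable (by simp) 0).hasFDerivAt
  have hc : HasDerivAt (fun s : ℝ => ((s,0,0,0) : E4)) ((1,0,0,0) : E4) 0 :=
    HasDerivAt.prodMk (hasDerivAt_id 0) (hasDerivAt_const _ _)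
  exact hL.comp_hasDerivAt 0 hc

lemma deriv_slot2 {F : E4 → ℝ} (hF : ContDiff ℝ (⊤ : ℕ∞) F) :
    HasDerivAt (fun s : ℝ => F (0,s,0,0)) (fderiv ℝ F 0 (0,1,0,0)) 0 := by
  have hL : HasFDerivAt F (fderiv ℝ F 0) 0 := (hF.differentiable (by simp) 0).hasFDerivAt
  have hc : HasDerivAt (fun s : ℝ => ((0,s,0,0) : E4)) ((0,1,0,0) : E4) 0 :=
    HasDerivAt.prodMk (hasDerivAt_const _ _) (HasDerivAt.prodMk (hasDerivAt_id 0) (hasDerivAt_const _ _))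
  exact hL.comp_hasDerivAt 0 hc

lemma deriv_slot3 {F : E4 → ℝ} (hF : ContDiff ℝ (⊤ : ℕ∞) F) :
    HasDerivAt (fun s : ℝ => F (0,0,s,0)) (fderiv ℝ F 0 (0,0,1,0)) 0 := by
  have hL : HasFDerivAt F (fderiv ℝ F 0) 0 := (hF.differentiable (by simp) 0).hasFDerivAt
  have hc : HasDerivAt (fun s : ℝ => ((0,0,s,0) : E4)) ((0,0,1,0) : E4) 0 :=
    HasDerivAt.prodMk (hasDerivAt_const _ _) (HasDerivAt.prodMk (hasDerivAt_const _ _)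
      (HasDerivAt.prodMk (hasDerivAt_id 0) (hasDerivAt_const _ _)))
  exact hL.comp_hasDerivAt 0 hc

lemma deriv_slot4 {F : E4 → ℝ} (hF : ContDiff ℝ (⊤ : ℕ∞) F) :
    HasDerivAt (fun s : ℝ => F (0,0,0,s)) (fderiv ℝ F 0 (0,0,0,1)) 0 := by
  have hL : HasFDerivAt F (fderiv ℝ F 0) 0 := (hF.differentiable (by simp) 0).hasFDerivAt
  have hc : HasDerivAt (fun s : ℝ => ((0,0,0,s) : E4)) ((0,0,0,1) : E4) 0 :=
    HasDerivAt.prodMk (hasDerivAt_const _ _) (HasDerivAt.prodMk (hasDerivAt_const _ _)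
      (HasDerivAt.prodMk (hasDerivAt_const _ _) (hasDerivAt_id 0)))
  exact hL.comp_hasDerivAt 0 hc


set_option maxHeartbeats 4000000 in
theorem lemmaA2_flow_comparison
    (Ξ : ℝ → ℝ → ℝ → ℝ → ℝ)
    (hΞsmooth : ContDiff ℝ (⊤ : ℕ∞) (fun p : ℝ × ℝ × ℝ × ℝ => Ξ p.1 p.2.1 p.2.2.1 p.2.2.2))
    (hΞ0 : Ξ 0 0 0 0 = 0)
    (hΞψ : deriv (fun s => Ξ s 0 0 0) 0 < 0) :
    ∃ Ct > (0 : ℝ), ∃ CΞ > (0 : ℝ), ∃ ε₀ > (0 : ℝ),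
      ∀ T : ℝ, 0 < T →
      ∀ ω11 ω12 ω13 ω21 ω22 ω23 : ℝ → ℝ → ℝ,
        ω11 0 0 = 0 → ω12 0 0 = 0 → ω13 0 0 = 0 →
        ω21 0 0 = 0 → ω22 0 0 = 0 → ω23 0 0 = 0 →
        (∀ t ψ, ω11 (t + T) ψ = ω11 t ψ) → (∀ t ψ, ω12 (t + T) ψ = ω12 t ψ) →
        (∀ t ψ, ω13 (t + T) ψ = ω13 t ψ) → (∀ t ψ, ω21 (t + T) ψ = ω21 t ψ) →
        (∀ t ψ, ω22 (t + T) ψ = ω22 t ψ) → (∀ t ψ, ω23 (t + T) ψ = ω23 t ψ) →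
        C1NormLe ω11 ε₀ → C1NormLe ω12 ε₀ → C1NormLe ω13 ε₀ →
        C1NormLe ω21 ε₀ → C1NormLe ω22 ε₀ → C1NormLe ω23 ε₀ →
        ∀ Ψ1 Ψ2 : ℝ → ℝ → ℝ → ℝ,
          (∀ t x, Ψ1 0 t x = x) → (∀ t x, Ψ2 0 t x = x) →
          (∀ τ t x, HasDerivAt (fun τ' => Ψ1 τ' t x)
            (Ξ (Ψ1 τ t x) (ω11 (t + τ) (Ψ1 τ t x)) (ω12 (t + τ) (Ψ1 τ t x))
              (ω13 (t + τ) (Ψ1 τ t x))) τ) →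
          (∀ τ t x, HasDerivAt (fun τ' => Ψ2 τ' t x)
            (Ξ (Ψ2 τ t x) (ω21 (t + τ) (Ψ2 τ t x)) (ω22 (t + τ) (Ψ2 τ t x))
              (ω23 (t + τ) (Ψ2 τ t x))) τ) →
          ∀ S : ℝ,
            S = (1 + Ct * ε₀) * (1 / |deriv (fun s => Ξ s 0 0 0) 0|) *
              ((1 + |deriv (fun s => Ξ 0 s 0 0) 0|) * max (supN2 ω11) (supN2 ω21) +
               (1 + |deriv (fun s => Ξ 0 0 s 0) 0|) * max (supN2 ω12) (supN2 ω22) +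
               (1 + |deriv (fun s => Ξ 0 0 0 s) 0|) * max (supN2 ω13) (supN2 ω23)) →
          ∀ τ t x : ℝ, 0 ≤ τ → x ∈ Set.Icc (-S) S →
            Ψ1 τ t x ∈ Set.Icc (-S) S ∧ Ψ2 τ t x ∈ Set.Icc (-S) S ∧
            |Ψ1 τ t x - Ψ2 τ t x| ≤
              (1 / |deriv (fun s => Ξ s 0 0 0) 0|) *
                (Real.exp ((1 + CΞ * ε₀) * |deriv (fun s => Ξ s 0 0 0) 0| * τ) - 1) *
                ((1 + |deriv (fun s => Ξ 0 s 0 0) 0|) * supN2 (fun t x => ω11 t x - ω21 t x) +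
                 (1 + |deriv (fun s => Ξ 0 0 s 0) 0|) * supN2 (fun t x => ω12 t x - ω22 t x) +
                 (1 + |deriv (fun s => Ξ 0 0 0 s) 0|) * supN2 (fun t x => ω13 t x - ω23 t x)) := by
  set F : E4 → ℝ := fun p : E4 => Ξ p.1 p.2.1 p.2.2.1 p.2.2.2 with hFdef
  have hF : ContDiff ℝ (⊤ : ℕ∞) F := hΞsmooth
  have hF0 : F 0 = 0 := hΞ0
  set D : E4 →L[ℝ] ℝ := fderiv ℝ F 0 with hDdef
  have hder1 : deriv (fun s => Ξ s 0 0 0) 0 = D (1,0,0,0) := (deriv_slot1 hF).deriv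
  have hder2 : deriv (fun s => Ξ 0 s 0 0) 0 = D (0,1,0,0) := (deriv_slot2 hF).deriv
  have hder3 : deriv (fun s => Ξ 0 0 s 0) 0 = D (0,0,1,0) := (deriv_slot3 hF).deriv
  have hder4 : deriv (fun s => Ξ 0 0 0 s) 0 = D (0,0,0,1) := (deriv_slot4 hF).deriv
  set lam := |deriv (fun s => Ξ s 0 0 0) 0| with hlam_def
  have hlam : 0 < lam := abs_pos.mpr (ne_of_lt hΞψ)
  have hlam' : lam ≠ 0 := ne_of_gt hlam
  have hD1 : D (1,0,0,0) = -lam := by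
    rw [← hder1, hlam_def, abs_of_neg hΞψ, neg_neg]
  have hD1abs : |D (1,0,0,0)| = lam := by rw [hD1, abs_neg, abs_of_pos hlam]
  set b2 := |deriv (fun s => Ξ 0 s 0 0) 0| with hb2_def
  set b3 := |deriv (fun s => Ξ 0 0 s 0) 0| with hb3_def
  set b4 := |deriv (fun s => Ξ 0 0 0 s) 0| with hb4_def
  have hb20 : 0 ≤ b2 := abs_nonneg _
  have hb30 : 0 ≤ b3 := abs_nonneg _
  have hb40 : 0 ≤ b4 := abs_nonneg _
  have hD2abs : |D (0,1,0,0)| = b2 := by rw [hb2_def, hder2]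
  have hD3abs : |D (0,0,1,0)| = b3 := by rw [hb3_def, hder3]
  have hD4abs : |D (0,0,0,1)| = b4 := by rw [hb4_def, hder4]
  set A := 3 + b2 + b3 + b4 with hA_def
  have hA3 : (3:ℝ) ≤ A := by rw [hA_def]; linarith
  have hA0 : (0:ℝ) < A := by linarith
  set δ := min (min (lam/2) (1/4)) (lam/(8*A)) with hδ_def
  have hδ0 : 0 < δ := lt_min (lt_min (by linarith only [hlam]) (by norm_num))
    (div_pos hlam (by linarith only [hA0]))
  have hδ1 : δ ≤ lam/2 := le_trans (min_le_left _ _) (min_le_left _ _)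
  have hδ2 : δ ≤ 1/4 := le_trans (min_le_left _ _) (min_le_right _ _)
  have hδ3 : δ ≤ lam/(8*A) := min_le_right _ _
  obtain ⟨r, hr0, hkey⟩ := key_mvt hF hδ0
  rw [← hDdef] at hkey
  set ε₀ := min (min (r/4) 1) (r*lam/(24*A)) with hε_def
  have hε0 : 0 < ε₀ := lt_min (lt_min (by linarith only [hr0]) one_pos)
    (div_pos (mul_pos hr0 hlam) (by linarith only [hA0]))
  have hεr : ε₀ ≤ r/4 := le_trans (min_le_left _ _) (min_le_left _ _)
  have hε1 : ε₀ ≤ 1 := le_trans (min_le_left _ _) (min_le_right _ _)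
  have hεA : ε₀ ≤ r*lam/(24*A) := min_le_right _ _
  set CΞ := (b2+b3+b4)/lam + δ/(lam*ε₀) + 1 with hC_def
  have hCΞ0 : 0 < CΞ := by
    have h1 : 0 ≤ (b2+b3+b4)/lam := div_nonneg (by linarith only [hb20, hb30, hb40]) hlam.le
    have h2 : 0 ≤ δ/(lam*ε₀) := div_nonneg hδ0.le (mul_pos hlam hε0).le
    rw [hC_def]
    linarith only [h1, h2]
  clear_value lam b2 b3 b4 A δ ε₀ CΞ
  refine ⟨1, one_pos, CΞ, hCΞ0, ε₀, hε0, ?_⟩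
  intro T hT ω11 ω12 ω13 ω21 ω22 ω23 _ _ _ _ _ _ _ _ _ _ _ _
    hw11 hw12 hw13 hw21 hw22 hw23 Ψ1 Ψ2 hΨ10 hΨ20 hΨ1d hΨ2d S hS τ t x hτ hx
  -- basic bounds on the perturbations
  have hb11 : ∀ s y, |ω11 s y| ≤ ε₀ := fun s y => (hw11.2 s y).1
  have hb12 : ∀ s y, |ω12 s y| ≤ ε₀ := fun s y => (hw12.2 s y).1
  have hb13 : ∀ s y, |ω13 s y| ≤ ε₀ := fun s y => (hw13.2 s y).1
  have hb21 : ∀ s y, |ω21 s y| ≤ ε₀ := fun s y => (hw21.2 s y).1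
  have hb22 : ∀ s y, |ω22 s y| ≤ ε₀ := fun s y => (hw22.2 s y).1
  have hb23 : ∀ s y, |ω23 s y| ≤ ε₀ := fun s y => (hw23.2 s y).1
  set M2 := max (supN2 ω11) (supN2 ω21) with hM2_def
  set M3 := max (supN2 ω12) (supN2 ω22) with hM3_def
  set M4 := max (supN2 ω13) (supN2 ω23) with hM4_def
  have hM2ε : M2 ≤ ε₀ := max_le (supN2_le hb11) (supN2_le hb21)
  have hM3ε : M3 ≤ ε₀ := max_le (supN2_le hb12) (supN2_le hb22)
  have hM4ε : M4 ≤ ε₀ := max_le (supN2_le hb13) (supN2_le hb23)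
  have hM20 : 0 ≤ M2 := le_trans (supN2_nonneg hb11) (le_max_left _ _)
  have hM30 : 0 ≤ M3 := le_trans (supN2_nonneg hb12) (le_max_left _ _)
  have hM40 : 0 ≤ M4 := le_trans (supN2_nonneg hb13) (le_max_left _ _)
  have hpt11 : ∀ s y, |ω11 s y| ≤ M2 := fun s y =>
    le_trans (supN2_ge hb11 s y) (le_max_left _ _)
  have hpt21 : ∀ s y, |ω21 s y| ≤ M2 := fun s y =>
    le_trans (supN2_ge hb21 s y) (le_max_right _ _)
  have hpt12 : ∀ s y, |ω12 s y| ≤ M3 := fun s y =>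
    le_trans (supN2_ge hb12 s y) (le_max_left _ _)
  have hpt22 : ∀ s y, |ω22 s y| ≤ M3 := fun s y =>
    le_trans (supN2_ge hb22 s y) (le_max_right _ _)
  have hpt13 : ∀ s y, |ω13 s y| ≤ M4 := fun s y =>
    le_trans (supN2_ge hb13 s y) (le_max_left _ _)
  have hpt23 : ∀ s y, |ω23 s y| ≤ M4 := fun s y =>
    le_trans (supN2_ge hb23 s y) (le_max_right _ _)
  set Msum := M2 + M3 + M4 with hMsum_def
  clear_value Msum
  have hMsum0 : 0 ≤ Msum := by
    rw [hMsum_def]; linarith only [hM20, hM30, hM40]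
  -- facts about S
  clear_value M2 M3 M4
  have hQ : lam * S = (1+ε₀) * ((1+b2)*M2 + (1+b3)*M3 + (1+b4)*M4) := by
    rw [hS]; field_simp
  have hQ0 : 0 ≤ (1+b2)*M2 + (1+b3)*M3 + (1+b4)*M4 := by
    linarith only [mul_nonneg hb20 hM20, mul_nonneg hb30 hM30, mul_nonneg hb40 hM40,
      hM20, hM30, hM40]
  have hlamS_low : (b2*M2 + b3*M3 + b4*M4) + Msum ≤ lam * S := by
    rw [hQ, hMsum_def]
    linarith only [mul_nonneg hε0.le hQ0]
  have hQA : (1+b2)*M2 + (1+b3)*M3 + (1+b4)*M4 ≤ A*Msum := by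
    rw [hA_def, hMsum_def]
    linarith only [mul_nonneg hb20 hM30, mul_nonneg hb20 hM40, mul_nonneg hb30 hM20,
      mul_nonneg hb30 hM40, mul_nonneg hb40 hM20, mul_nonneg hb40 hM30,
      hM20, hM30, hM40]
  have hlamS_up : lam * S ≤ 2*(A*Msum) := by
    rw [hQ]
    linarith only [hQA, hQ0, mul_nonneg (sub_nonneg.mpr hε1) hQ0]
  have hS0 : 0 ≤ S := by
    have h1 : 0 ≤ lam * S := by
      refine le_trans ?_ hlamS_low
      linarith only [mul_nonneg hb20 hM20, mul_nonneg hb30 hM30, mul_nonneg hb40 hM40,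
        hMsum0]
    have h2 : S = lam*S/lam := by field_simp
    rw [h2]
    exact div_nonneg h1 hlam.le
  have hSr : S ≤ r/4 := by
    have h1 : Msum ≤ 3*ε₀ := by
      rw [hMsum_def]; linarith only [hM2ε, hM3ε, hM4ε]
    have h2 : lam * S ≤ 2*(A*(3*ε₀)) := by
      refine le_trans hlamS_up ?_
      linarith only [mul_le_mul_of_nonneg_left h1 hA0.le]
    have h24 : (0:ℝ) < 24*A := by linarith only [hA0]
    have hAne : (24:ℝ)*A ≠ 0 := ne_of_gt h24
    have h3 : ε₀ * (24*A) ≤ r*lam := by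
      calc ε₀ * (24*A) ≤ (r*lam/(24*A)) * (24*A) := mul_le_mul_of_nonneg_right hεA h24.le
        _ = r*lam := by field_simp
    have h4 : lam * S ≤ lam * (r/4) := by linarith only [h2, h3]
    exact le_of_mul_le_mul_left h4 hlam
  have hδS : δ * S ≤ Msum/4 := by
    have h1 : δ * S ≤ (lam/(8*A)) * S := mul_le_mul_of_nonneg_right hδ3 hS0
    have h2 : (lam/(8*A)) * S = (lam*S)/(8*A) := by ring
    have h8A : (0:ℝ) < 8*A := by linarith only [hA0]
    have h3 : (lam*S)/(8*A) ≤ (2*(A*Msum))/(8*A) := (div_le_div_iff_of_pos_right h8A).mpr hlamS_up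
    have hAne : (8:ℝ)*A ≠ 0 := ne_of_gt (by linarith only [hA0])
    have h4 : (2*(A*Msum))/(8*A) = Msum/4 := by
      rw [div_eq_div_iff hAne (by norm_num : (4:ℝ) ≠ 0)]
      ring
    linarith
  -- the two sign conditions at the barrier
  have core_neg : ∀ η w2 w3 w4 : ℝ, 0 < η → η ≤ r/4 →
      |w2| ≤ M2 → |w3| ≤ M3 → |w4| ≤ M4 → |w2| ≤ ε₀ → |w3| ≤ ε₀ → |w4| ≤ ε₀ →
      F (S+η, w2, w3, w4) < 0 := by
    intro η w2 w3 w4 hη hηr h2 h3 h4 e2 e3 e4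
    have habs : |S+η| = S+η := abs_of_nonneg (by linarith only [hS0, hη])
    have hpr : ‖((S+η, w2, w3, w4) : E4)‖ ≤ r :=
      E4_norm_le (by rw [habs]; linarith only [hSr, hηr, hr0])
        (by simp only []; linarith only [e2, hεr, hr0])
        (by simp only []; linarith only [e3, hεr, hr0])
        (by simp only []; linarith only [e4, hεr, hr0])
    have hFDp : |F (S+η, w2, w3, w4) - D ((S+η, w2, w3, w4) : E4)| ≤
        δ * ‖((S+η, w2, w3, w4) : E4)‖ := by
      have h0 : ‖(0:E4)‖ ≤ r := by rw [norm_zero]; linarith only [hr0]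
      have := hkey ((S+η, w2, w3, w4) : E4) 0 hpr h0
      simpa [hF0] using this
    have hpn : ‖((S+η, w2, w3, w4) : E4)‖ ≤ (S+η) + Msum := by
      rw [hMsum_def]
      exact E4_norm_le (by rw [habs]; linarith only [hM20, hM30, hM40])
        (by simp only []; linarith only [h2, hM30, hM40, hS0, hη])
        (by simp only []; linarith only [h3, hM20, hM40, hS0, hη])
        (by simp only []; linarith only [h4, hM20, hM30, hS0, hη])
    have hDp : D ((S+η, w2, w3, w4) : E4) ≤ -lam*(S+η) + (b2*M2 + b3*M3 + b4*M4) := by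
      have hd := E4_decomp D ((S+η, w2, w3, w4) : E4)
      simp only [Prod.fst, Prod.snd] at hd
      rw [hd, hD1]
      have t2 : w2 * D (0,1,0,0) ≤ b2 * M2 := by
        calc w2 * D (0,1,0,0) ≤ |w2 * D (0,1,0,0)| := le_abs_self _
          _ = |w2| * |D (0,1,0,0)| := abs_mul _ _
          _ ≤ M2 * b2 := by rw [hD2abs]; exact mul_le_mul_of_nonneg_right h2 hb20
          _ = b2 * M2 := mul_comm _ _
      have t3 : w3 * D (0,0,1,0) ≤ b3 * M3 := by
        calc w3 * D (0,0,1,0) ≤ |w3 * D (0,0,1,0)| := le_abs_self _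
          _ = |w3| * |D (0,0,1,0)| := abs_mul _ _
          _ ≤ M3 * b3 := by rw [hD3abs]; exact mul_le_mul_of_nonneg_right h3 hb30
          _ = b3 * M3 := mul_comm _ _
      have t4 : w4 * D (0,0,0,1) ≤ b4 * M4 := by
        calc w4 * D (0,0,0,1) ≤ |w4 * D (0,0,0,1)| := le_abs_self _
          _ = |w4| * |D (0,0,0,1)| := abs_mul _ _
          _ ≤ M4 * b4 := by rw [hD4abs]; exact mul_le_mul_of_nonneg_right h4 hb40
          _ = b4 * M4 := mul_comm _ _
      linarith only [t2, t3, t4]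
    have hFp : F (S+η, w2, w3, w4) ≤ D ((S+η, w2, w3, w4) : E4)
        + δ * ‖((S+η, w2, w3, w4) : E4)‖ := by
      linarith only [(abs_le.mp hFDp).2]
    have hδn : δ * ‖((S+η, w2, w3, w4) : E4)‖ ≤ δ*(S+η) + δ*Msum := by
      linarith only [mul_le_mul_of_nonneg_left hpn hδ0.le]
    have hδη : δ * η ≤ (lam/2) * η := mul_le_mul_of_nonneg_right hδ1 hη.le
    have hδM : δ * Msum ≤ Msum/4 := by
      linarith only [mul_le_mul_of_nonneg_right hδ2 hMsum0]
    linarith only [hFp, hDp, hδn, hδη, hδM, hδS, hlamS_low, mul_pos hlam hη, hMsum0]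
  have core_pos : ∀ η w2 w3 w4 : ℝ, 0 < η → η ≤ r/4 →
      |w2| ≤ M2 → |w3| ≤ M3 → |w4| ≤ M4 → |w2| ≤ ε₀ → |w3| ≤ ε₀ → |w4| ≤ ε₀ →
      0 < F (-(S+η), w2, w3, w4) := by
    intro η w2 w3 w4 hη hηr h2 h3 h4 e2 e3 e4
    have habs : |(-(S+η))| = S+η := by
      rw [abs_neg]; exact abs_of_nonneg (by linarith only [hS0, hη])
    have hpr : ‖((-(S+η), w2, w3, w4) : E4)‖ ≤ r :=
      E4_norm_le (by rw [habs]; linarith only [hSr, hηr, hr0])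
        (by simp only []; linarith only [e2, hεr, hr0])
        (by simp only []; linarith only [e3, hεr, hr0])
        (by simp only []; linarith only [e4, hεr, hr0])
    have hFDp : |F (-(S+η), w2, w3, w4) - D ((-(S+η), w2, w3, w4) : E4)| ≤
        δ * ‖((-(S+η), w2, w3, w4) : E4)‖ := by
      have h0 : ‖(0:E4)‖ ≤ r := by rw [norm_zero]; linarith only [hr0]
      have := hkey ((-(S+η), w2, w3, w4) : E4) 0 hpr h0
      simpa [hF0] using this
    have hpn : ‖((-(S+η), w2, w3, w4) : E4)‖ ≤ (S+η) + Msum := by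
      rw [hMsum_def]
      exact E4_norm_le (by rw [habs]; linarith only [hM20, hM30, hM40])
        (by simp only []; linarith only [h2, hM30, hM40, hS0, hη])
        (by simp only []; linarith only [h3, hM20, hM40, hS0, hη])
        (by simp only []; linarith only [h4, hM20, hM30, hS0, hη])
    have hDp : lam*(S+η) - (b2*M2 + b3*M3 + b4*M4) ≤ D ((-(S+η), w2, w3, w4) : E4) := by
      have hd := E4_decomp D ((-(S+η), w2, w3, w4) : E4)
      simp only [Prod.fst, Prod.snd] at hd
      rw [hd, hD1]
      have t2 : -(b2 * M2) ≤ w2 * D (0,1,0,0) := by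
        have hh : |w2 * D (0,1,0,0)| ≤ b2 * M2 := by
          rw [abs_mul, hD2abs]
          calc |w2| * b2 ≤ M2 * b2 := mul_le_mul_of_nonneg_right h2 hb20
            _ = b2 * M2 := mul_comm _ _
        linarith only [hh, neg_abs_le (w2 * D (0,1,0,0))]
      have t3 : -(b3 * M3) ≤ w3 * D (0,0,1,0) := by
        have hh : |w3 * D (0,0,1,0)| ≤ b3 * M3 := by
          rw [abs_mul, hD3abs]
          calc |w3| * b3 ≤ M3 * b3 := mul_le_mul_of_nonneg_right h3 hb30
            _ = b3 * M3 := mul_comm _ _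
        linarith only [hh, neg_abs_le (w3 * D (0,0,1,0))]
      have t4 : -(b4 * M4) ≤ w4 * D (0,0,0,1) := by
        have hh : |w4 * D (0,0,0,1)| ≤ b4 * M4 := by
          rw [abs_mul, hD4abs]
          calc |w4| * b4 ≤ M4 * b4 := mul_le_mul_of_nonneg_right h4 hb40
            _ = b4 * M4 := mul_comm _ _
        linarith only [hh, neg_abs_le (w4 * D (0,0,0,1))]
      linarith only [t2, t3, t4]
    have hFp : D ((-(S+η), w2, w3, w4) : E4)
        - δ * ‖((-(S+η), w2, w3, w4) : E4)‖ ≤ F (-(S+η), w2, w3, w4) := by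
      linarith only [(abs_le.mp hFDp).1]
    have hδn : δ * ‖((-(S+η), w2, w3, w4) : E4)‖ ≤ δ*(S+η) + δ*Msum := by
      linarith only [mul_le_mul_of_nonneg_left hpn hδ0.le]
    have hδη : δ * η ≤ (lam/2) * η := mul_le_mul_of_nonneg_right hδ1 hη.le
    have hδM : δ * Msum ≤ Msum/4 := by
      linarith only [mul_le_mul_of_nonneg_right hδ2 hMsum0]
    linarith only [hFp, hDp, hδn, hδη, hδM, hδS, hlamS_low, mul_pos hlam hη, hMsum0]
  -- invariance of [-S, S]
  have hinv : ∀ (g w2 w3 w4 : ℝ → ℝ),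
      g 0 = x →
      (∀ u, HasDerivAt g (F (g u, w2 u, w3 u, w4 u)) u) →
      (∀ u, |w2 u| ≤ M2 ∧ |w3 u| ≤ M3 ∧ |w4 u| ≤ M4 ∧
            |w2 u| ≤ ε₀ ∧ |w3 u| ≤ ε₀ ∧ |w4 u| ≤ ε₀) →
      ∀ u, 0 ≤ u → g u ∈ Set.Icc (-S) S := by
    intro g w2 w3 w4 hg0 hgd hw
    have hup : ∀ η, 0 < η → η ≤ r/4 → ∀ u, 0 ≤ u → g u ≤ S + η := by
      intro η hη hηr
      refine barrier_up hgd ?_ ?_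
      · rw [hg0]; linarith only [hx.2, hη]
      · intro u hu hgu
        rw [hgu]
        exact core_neg η _ _ _ hη hηr (hw u).1 (hw u).2.1 (hw u).2.2.1
          (hw u).2.2.2.1 (hw u).2.2.2.2.1 (hw u).2.2.2.2.2
    have hdown : ∀ η, 0 < η → η ≤ r/4 → ∀ u, 0 ≤ u → -(S + η) ≤ g u := by
      intro η hη hηr
      have := barrier_up (f := fun u => -g u) (d := fun u => -(F (g u, w2 u, w3 u, w4 u)))
        (fun u => (hgd u).neg) (B := S + η)
        (by simp only [hg0]; linarith only [hx.1, hη])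
        (by
          intro u hu hgu
          have hgu' : g u = -(S+η) := by
            have hh : -g u = S + η := hgu
            linarith only [hh]
          show -(F (g u, w2 u, w3 u, w4 u)) < 0
          rw [hgu']
          have := core_pos η (w2 u) (w3 u) (w4 u) hη hηr (hw u).1 (hw u).2.1 (hw u).2.2.1
            (hw u).2.2.2.1 (hw u).2.2.2.2.1 (hw u).2.2.2.2.2
          linarith only [this])
      intro u hu
      have hh := this u hu
      linarith only [hh]
    intro u hu
    constructor
    · by_contra hc
      push_neg at hc
      have hηpos : 0 < min (r/4) ((-S - g u)/2) :=
        lt_min (by linarith only [hr0]) (by linarith only [hc])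
      have h1 := hdown _ hηpos (min_le_left _ _) u hu
      have h2 := min_le_right (r/4) ((-S - g u)/2)
      linarith only [h1, h2, hc]
    · by_contra hc
      push_neg at hc
      have hηpos : 0 < min (r/4) ((g u - S)/2) :=
        lt_min (by linarith only [hr0]) (by linarith only [hc])
      have h1 := hup _ hηpos (min_le_left _ _) u hu
      have h2 := min_le_right (r/4) ((g u - S)/2)
      linarith only [h1, h2, hc]
  have hinv1 : ∀ u, 0 ≤ u → Ψ1 u t x ∈ Set.Icc (-S) S := by
    refine hinv (fun u => Ψ1 u t x) (fun u => ω11 (t+u) (Ψ1 u t x))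
      (fun u => ω12 (t+u) (Ψ1 u t x)) (fun u => ω13 (t+u) (Ψ1 u t x))
      (hΨ10 t x) (fun u => hΨ1d u t x) ?_
    intro u
    exact ⟨hpt11 _ _, hpt12 _ _, hpt13 _ _, hb11 _ _, hb12 _ _, hb13 _ _⟩
  have hinv2 : ∀ u, 0 ≤ u → Ψ2 u t x ∈ Set.Icc (-S) S := by
    refine hinv (fun u => Ψ2 u t x) (fun u => ω21 (t+u) (Ψ2 u t x))
      (fun u => ω22 (t+u) (Ψ2 u t x)) (fun u => ω23 (t+u) (Ψ2 u t x))
      (hΨ20 t x) (fun u => hΨ2d u t x) ?_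
    intro u
    exact ⟨hpt21 _ _, hpt22 _ _, hpt23 _ _, hb21 _ _, hb22 _ _, hb23 _ _⟩
  refine ⟨hinv1 τ hτ, hinv2 τ hτ, ?_⟩
  -- Gronwall comparison
  set N2 := supN2 (fun t x => ω11 t x - ω21 t x) with hN2_def
  set N3 := supN2 (fun t x => ω12 t x - ω22 t x) with hN3_def
  set N4 := supN2 (fun t x => ω13 t x - ω23 t x) with hN4_def
  have hdN2 : ∀ s y, |ω11 s y - ω21 s y| ≤ 2*ε₀ := fun s y => by
    have hh := abs_sub (ω11 s y) (ω21 s y)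
    linarith only [hh, hb11 s y, hb21 s y]
  have hdN3 : ∀ s y, |ω12 s y - ω22 s y| ≤ 2*ε₀ := fun s y => by
    have hh := abs_sub (ω12 s y) (ω22 s y)
    linarith only [hh, hb12 s y, hb22 s y]
  have hdN4 : ∀ s y, |ω13 s y - ω23 s y| ≤ 2*ε₀ := fun s y => by
    have hh := abs_sub (ω13 s y) (ω23 s y)
    linarith only [hh, hb13 s y, hb23 s y]
  have hN2pt : ∀ s y, |ω11 s y - ω21 s y| ≤ N2 := fun s y => supN2_ge hdN2 s y
  have hN3pt : ∀ s y, |ω12 s y - ω22 s y| ≤ N3 := fun s y => supN2_ge hdN3 s y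
  have hN4pt : ∀ s y, |ω13 s y - ω23 s y| ≤ N4 := fun s y => supN2_ge hdN4 s y
  have hN20 : 0 ≤ N2 := supN2_nonneg hdN2
  have hN30 : 0 ≤ N3 := supN2_nonneg hdN3
  have hN40 : 0 ≤ N4 := supN2_nonneg hdN4
  set K := (1 + CΞ*ε₀)*lam with hK_def
  have hKlam : lam ≤ K := by
    rw [hK_def]
    linarith only [mul_nonneg (mul_nonneg hCΞ0.le hε0.le) hlam.le]
  have hK0 : 0 < K := lt_of_lt_of_le hlam hKlam
  have hKbig : lam + (b2+b3+b4)*ε₀ + δ ≤ K := by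
    have hε' : ε₀ ≠ 0 := ne_of_gt hε0
    have hexp : CΞ * ε₀ * lam = (b2+b3+b4)*ε₀ + δ + ε₀*lam := by
      rw [hC_def]; field_simp
    have h1 : K = lam + CΞ*ε₀*lam := by rw [hK_def]; ring
    linarith only [hexp, h1, mul_pos hε0 hlam]
  set Del := (b2+δ)*N2 + (b3+δ)*N3 + (b4+δ)*N4 with hDel_def
  have hDel0 : 0 ≤ Del := by
    rw [hDel_def]
    linarith only [mul_nonneg (by linarith only [hb20, hδ0.le] : (0:ℝ) ≤ b2+δ) hN20,
      mul_nonneg (by linarith only [hb30, hδ0.le] : (0:ℝ) ≤ b3+δ) hN30,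
      mul_nonneg (by linarith only [hb40, hδ0.le] : (0:ℝ) ≤ b4+δ) hN40]
  have hall : ∀ u, HasDerivAt (fun v => Ψ1 v t x - Ψ2 v t x)
      (F (Ψ1 u t x, ω11 (t+u) (Ψ1 u t x), ω12 (t+u) (Ψ1 u t x), ω13 (t+u) (Ψ1 u t x))
        - F (Ψ2 u t x, ω21 (t+u) (Ψ2 u t x), ω22 (t+u) (Ψ2 u t x), ω23 (t+u) (Ψ2 u t x))) u :=
    fun u => (hΨ1d u t x).sub (hΨ2d u t x)
  have hbound : ∀ u ∈ Set.Ico 0 τ,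
      ‖F (Ψ1 u t x, ω11 (t+u) (Ψ1 u t x), ω12 (t+u) (Ψ1 u t x), ω13 (t+u) (Ψ1 u t x))
        - F (Ψ2 u t x, ω21 (t+u) (Ψ2 u t x), ω22 (t+u) (Ψ2 u t x), ω23 (t+u) (Ψ2 u t x))‖
        ≤ K * ‖Ψ1 u t x - Ψ2 u t x‖ + Del := by
    intro u hu
    obtain ⟨hψ1l, hψ1r⟩ := hinv1 u hu.1
    obtain ⟨hψ2l, hψ2r⟩ := hinv2 u hu.1
    set y1 := Ψ1 u t x
    set y2 := Ψ2 u t x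
    set s := t + u
    have hy1S : |y1| ≤ S := abs_le.mpr ⟨hψ1l, hψ1r⟩
    have hy2S : |y2| ≤ S := abs_le.mpr ⟨hψ2l, hψ2r⟩
    set p : E4 := (y1, ω11 s y1, ω12 s y1, ω13 s y1) with hp_def
    set q : E4 := (y2, ω11 s y2, ω12 s y2, ω13 s y2) with hq_def
    set q' : E4 := (y2, ω21 s y2, ω22 s y2, ω23 s y2) with hq'_def
    have hpr : ‖p‖ ≤ r := E4_norm_le
      (by simp only [hp_def]; linarith only [hy1S, hSr, hr0])
      (by simp only [hp_def]; linarith only [hb11 s y1, hεr, hr0])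
      (by simp only [hp_def]; linarith only [hb12 s y1, hεr, hr0])
      (by simp only [hp_def]; linarith only [hb13 s y1, hεr, hr0])
    have hqr : ‖q‖ ≤ r := E4_norm_le
      (by simp only [hq_def]; linarith only [hy2S, hSr, hr0])
      (by simp only [hq_def]; linarith only [hb11 s y2, hεr, hr0])
      (by simp only [hq_def]; linarith only [hb12 s y2, hεr, hr0])
      (by simp only [hq_def]; linarith only [hb13 s y2, hεr, hr0])
    have hq'r : ‖q'‖ ≤ r := E4_norm_le
      (by simp only [hq'_def]; linarith only [hy2S, hSr, hr0])
      (by simp only [hq'_def]; linarith only [hb21 s y2, hεr, hr0])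
      (by simp only [hq'_def]; linarith only [hb22 s y2, hεr, hr0])
      (by simp only [hq'_def]; linarith only [hb23 s y2, hεr, hr0])
    -- first piece
    have hl2 : |ω11 s y1 - ω11 s y2| ≤ ε₀ * |y1 - y2| := C1_lip hw11 s y1 y2
    have hl3 : |ω12 s y1 - ω12 s y2| ≤ ε₀ * |y1 - y2| := C1_lip hw12 s y1 y2
    have hl4 : |ω13 s y1 - ω13 s y2| ≤ ε₀ * |y1 - y2| := C1_lip hw13 s y1 y2
    have hεlip : ε₀ * |y1 - y2| ≤ |y1 - y2| := by
      linarith only [mul_nonneg (sub_nonneg.mpr hε1) (abs_nonneg (y1 - y2))]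
    have hpq1 : (p - q).1 = y1 - y2 := rfl
    have hpq2 : (p - q).2.1 = ω11 s y1 - ω11 s y2 := rfl
    have hpq3 : (p - q).2.2.1 = ω12 s y1 - ω12 s y2 := rfl
    have hpq4 : (p - q).2.2.2 = ω13 s y1 - ω13 s y2 := rfl
    have hpqn : ‖p - q‖ ≤ |y1 - y2| := by
      refine E4_norm_le ?_ ?_ ?_ ?_
      · rw [hpq1]
      · rw [hpq2]; exact hl2.trans hεlip
      · rw [hpq3]; exact hl3.trans hεlip
      · rw [hpq4]; exact hl4.trans hεlip
    have hDpq : |D (p - q)| ≤ (lam + (b2+b3+b4)*ε₀) * |y1 - y2| := by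
      have h := E4_D_abs D (p - q)
      rw [hpq1, hpq2, hpq3, hpq4, hD1abs, hD2abs, hD3abs, hD4abs] at h
      have c2 : |ω11 s y1 - ω11 s y2| * b2 ≤ (ε₀ * |y1-y2|) * b2 :=
        mul_le_mul_of_nonneg_right hl2 hb20
      have c3 : |ω12 s y1 - ω12 s y2| * b3 ≤ (ε₀ * |y1-y2|) * b3 :=
        mul_le_mul_of_nonneg_right hl3 hb30
      have c4 : |ω13 s y1 - ω13 s y2| * b4 ≤ (ε₀ * |y1-y2|) * b4 :=
        mul_le_mul_of_nonneg_right hl4 hb40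
      linarith only [h, c2, c3, c4]
    have h1 : |F p - F q| ≤ K * |y1 - y2| := by
      have hk := hkey p q hpr hqr
      have habs : |F p - F q| ≤ δ * ‖p - q‖ + |D (p - q)| := by
        have h := abs_add_le (F p - F q - D (p-q)) (D (p-q))
        simp only [sub_add_cancel] at h
        linarith only [h, hk]
      have hδpq : δ * ‖p - q‖ ≤ δ * |y1 - y2| := mul_le_mul_of_nonneg_left hpqn hδ0.le
      have hKmul : (lam + (b2+b3+b4)*ε₀ + δ) * |y1 - y2| ≤ K * |y1 - y2| :=
        mul_le_mul_of_nonneg_right hKbig (abs_nonneg _)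
      linarith only [habs, hδpq, hDpq, hKmul]
    -- second piece
    have hqq1 : (q - q').1 = y2 - y2 := rfl
    have hqq2 : (q - q').2.1 = ω11 s y2 - ω21 s y2 := rfl
    have hqq3 : (q - q').2.2.1 = ω12 s y2 - ω22 s y2 := rfl
    have hqq4 : (q - q').2.2.2 = ω13 s y2 - ω23 s y2 := rfl
    have hqqn : ‖q - q'‖ ≤ N2 + N3 + N4 := by
      refine E4_norm_le ?_ ?_ ?_ ?_
      · rw [hqq1, sub_self, abs_zero]; linarith only [hN20, hN30, hN40]
      · rw [hqq2]; linarith only [hN2pt s y2, hN30, hN40]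
      · rw [hqq3]; linarith only [hN3pt s y2, hN20, hN40]
      · rw [hqq4]; linarith only [hN4pt s y2, hN20, hN30]
    have hDqq : |D (q - q')| ≤ b2*N2 + b3*N3 + b4*N4 := by
      have h := E4_D_abs D (q - q')
      rw [hqq1, hqq2, hqq3, hqq4, hD1abs, hD2abs, hD3abs, hD4abs] at h
      have hz : |y2 - y2| = 0 := by simp
      rw [hz] at h
      have c2 : |ω11 s y2 - ω21 s y2| * b2 ≤ N2 * b2 :=
        mul_le_mul_of_nonneg_right (hN2pt s y2) hb20
      have c3 : |ω12 s y2 - ω22 s y2| * b3 ≤ N3 * b3 :=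
        mul_le_mul_of_nonneg_right (hN3pt s y2) hb30
      have c4 : |ω13 s y2 - ω23 s y2| * b4 ≤ N4 * b4 :=
        mul_le_mul_of_nonneg_right (hN4pt s y2) hb40
      linarith only [h, c2, c3, c4]
    have h2 : |F q - F q'| ≤ Del := by
      have hk := hkey q q' hqr hq'r
      have habs : |F q - F q'| ≤ δ * ‖q - q'‖ + |D (q - q')| := by
        have h := abs_add_le (F q - F q' - D (q-q')) (D (q-q'))
        simp only [sub_add_cancel] at h
        linarith only [h, hk]
      have hδqq : δ * ‖q - q'‖ ≤ δ*N2 + δ*N3 + δ*N4 := by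
        linarith only [mul_le_mul_of_nonneg_left hqqn hδ0.le]
      rw [hDel_def]
      linarith only [habs, hDqq, hδqq]
    calc ‖F p - F q'‖ = |F p - F q'| := Real.norm_eq_abs _
      _ ≤ |F p - F q| + |F q - F q'| := abs_sub_le _ _ _
      _ ≤ K * |y1 - y2| + Del := by linarith only [h1, h2]
      _ = K * ‖y1 - y2‖ + Del := by rw [Real.norm_eq_abs]
  have hcont : ContinuousOn (fun v => Ψ1 v t x - Ψ2 v t x) (Set.Icc 0 τ) :=
    (Differentiable.continuous (fun u => (hall u).differentiableAt)).continuousOn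
  have hgron := norm_le_gronwallBound_of_norm_deriv_right_le (δ := 0) (K := K) (ε := Del)
    (a := 0) (b := τ)
    (f := fun v => Ψ1 v t x - Ψ2 v t x)
    (f' := fun u => F (Ψ1 u t x, ω11 (t+u) (Ψ1 u t x), ω12 (t+u) (Ψ1 u t x),
        ω13 (t+u) (Ψ1 u t x))
      - F (Ψ2 u t x, ω21 (t+u) (Ψ2 u t x), ω22 (t+u) (Ψ2 u t x), ω23 (t+u) (Ψ2 u t x)))
    hcont (fun u _ => (hall u).hasDerivWithinAt)
    (by show ‖Ψ1 0 t x - Ψ2 0 t x‖ ≤ 0; rw [hΨ10 t x, hΨ20 t x]; simp)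
    hbound τ (Set.mem_Icc.mpr ⟨hτ, le_refl τ⟩)
  rw [gronwallBound_of_K_ne_0 hK0.ne'] at hgron
  simp only [sub_zero, zero_mul, zero_add, Real.norm_eq_abs] at hgron
  have hE1 : 1 ≤ Real.exp (K*τ) := Real.one_le_exp (mul_nonneg hK0.le hτ)
  have hDelle : Del ≤ (1+b2)*N2 + (1+b3)*N3 + (1+b4)*N4 := by
    rw [hDel_def]
    have c2 := mul_le_mul_of_nonneg_right (show b2+δ ≤ 1+b2 by linarith only [hδ2]) hN20
    have c3 := mul_le_mul_of_nonneg_right (show b3+δ ≤ 1+b3 by linarith only [hδ2]) hN30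
    have c4 := mul_le_mul_of_nonneg_right (show b4+δ ≤ 1+b4 by linarith only [hδ2]) hN40
    linarith only [c2, c3, c4]
  have hfull0 : 0 ≤ (1+b2)*N2 + (1+b3)*N3 + (1+b4)*N4 := by
    linarith only [mul_nonneg (by linarith only [hb20] : (0:ℝ) ≤ 1+b2) hN20,
      mul_nonneg (by linarith only [hb30] : (0:ℝ) ≤ 1+b3) hN30,
      mul_nonneg (by linarith only [hb40] : (0:ℝ) ≤ 1+b4) hN40]
  have hdiv : Del/K ≤ ((1+b2)*N2 + (1+b3)*N3 + (1+b4)*N4)/lam :=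
    div_le_div₀ hfull0 hDelle hlam hKlam
  have hfin := mul_le_mul_of_nonneg_right hdiv
    (show (0:ℝ) ≤ Real.exp (K*τ) - 1 by linarith only [hE1])
  calc |Ψ1 τ t x - Ψ2 τ t x| ≤ Del/K * (Real.exp (K*τ) - 1) := hgron
    _ ≤ ((1+b2)*N2 + (1+b3)*N3 + (1+b4)*N4)/lam * (Real.exp (K*τ) - 1) := hfin
    _ = (1/lam) * (Real.exp (K*τ) - 1) *
        ((1+b2)*N2 + (1+b3)*N3 + (1+b4)*N4) := by ring

end
end
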